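/- arXiv:math/0305215 — 9 statements merged into one kernel-verified Lean document; each statement's English description precedes it below -/
import Mathlib

section
/- Every proper monomial ideal I in the polynomial ring S = k[x_1,…,x_n] over a field k admits a finite Stanley decomposition of S/I. -/
open MvPolynomial

/-- `I` is a monomial ideal: it is generated by a set of monomials `x^u`. -/
def IsMonomialIdeal {k : Type} [Field k] {n : ℕ} (I : Ideal (MvPolynomial (Fin n) k)) : Prop :=
  ∃ G : Set (Fin n →₀ ℕ), I = Ideal.span ((fun u => (monomial u (1 : k))) '' G)

/-- The set of exponent vectors of monomials in the pair `(x^u, σ)`, namely all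
`x^{u+v}` with `supp v ⊆ σ`. -/
def stanleyPairSet {n : ℕ} (u : Fin n →₀ ℕ) (σ : Finset (Fin n)) : Set (Fin n →₀ ℕ) :=
  {w | ∃ v : Fin n →₀ ℕ, (∀ i, v i ≠ 0 → i ∈ σ) ∧ w = u + v}

/-- A Stanley decomposition of `S/I`: a finite set of pairs `(x^u, σ)` whose associated
monomial sets are pairwise disjoint and whose union is exactly the set of monomials not in `I`. -/
def IsStanleyDecomp {k : Type} [Field k] {n : ℕ} (I : Ideal (MvPolynomial (Fin n) k))
    (𝔖 : Finset ((Fin n →₀ ℕ) × Finset (Fin n))) : Prop :=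
  (∀ p ∈ 𝔖, ∀ q ∈ 𝔖, p ≠ q → Disjoint (stanleyPairSet p.1 p.2) (stanleyPairSet q.1 q.2)) ∧
  (⋃ p ∈ (𝔖 : Set ((Fin n →₀ ℕ) × Finset (Fin n))), stanleyPairSet p.1 p.2)
      = {w | monomial w (1 : k) ∉ I}

/-!
The exponents of the monomials outside `I` form a lower set `L ⊆ ℕⁿ`. By Dickson's lemma the
complement of `L` has finitely many minimal elements; let `N` be their join. Then membership in
`L` only depends on the truncation `z ⊓ N`, and the fibre of the truncation over a point `w ≤ N`
is exactly the Stanley set `(x^w, {i | w i = N i})`. The fibres over the points of `L` below `N`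
therefore form a Stanley decomposition.
-/

theorem IsLowerSet.exists_inf_mem_iff {α : Type*} [Lattice α] [OrderBot α]
    [WellQuasiOrderedLE α] {L : Set α} (hL : IsLowerSet L) :
    ∃ N : α, ∀ z, z ⊓ N ∈ L ↔ z ∈ L := by
  have hmin : {x | Minimal (· ∉ L) x}.Finite :=
    WellQuasiOrderedLE.finite_of_isAntichain (setOfPred_minimal_antichain _)
  refine ⟨hmin.toFinset.sup id, fun z => ⟨fun hz => ?_, fun hz => hL inf_le_left hz⟩⟩
  by_contra hzL
  obtain ⟨m, hmz, hm⟩ := exists_minimal_le_of_wellFoundedLT (· ∉ L) z hzL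
  have hmN : m ≤ hmin.toFinset.sup id := Finset.le_sup (f := id) (hmin.mem_toFinset.mpr hm)
  exact hm.prop (hL (le_inf hmz hmN) hz)

theorem isLowerSet_setOf_monomial_notMem {σ R : Type*} [CommSemiring R]
    (I : Ideal (MvPolynomial σ R)) : IsLowerSet {w | monomial w (1 : R) ∉ I} :=
  fun _ _ hba ha hb => ha (I.mem_of_dvd (monomial_dvd_monomial.mpr ⟨Or.inr hba, dvd_rfl⟩) hb)

section Stanley

variable {n : ℕ}

def saturatedCoords (N w : Fin n →₀ ℕ) : Finset (Fin n) :=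
  Finset.univ.filter fun i => N i ≤ w i

theorem stanleyPairSet_saturatedCoords {N w : Fin n →₀ ℕ} (hw : w ≤ N) :
    stanleyPairSet w (saturatedCoords N w) = {z | z ⊓ N = w} := by
  ext z
  simp only [stanleyPairSet, saturatedCoords, Finset.mem_filter, Finset.mem_univ, true_and,
    Set.mem_ofPred_eq]
  constructor
  · rintro ⟨v, hv, rfl⟩
    ext i
    have hwi := hw i
    have hvi := hv i
    simp only [Finsupp.inf_apply, Finsupp.add_apply]
    omega
  · intro hz
    have hwz : w ≤ z := hz ▸ inf_le_left
    refine ⟨z - w, fun i hi => ?_, (add_tsub_cancel_of_le hwz).symm⟩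
    have hzi := DFunLike.congr_fun hz i
    simp only [Finsupp.inf_apply, Finsupp.tsub_apply] at hzi hi
    omega

theorem exists_stanley_partition_of_isLowerSet {L : Set (Fin n →₀ ℕ)} (hL : IsLowerSet L) :
    ∃ 𝔖 : Finset ((Fin n →₀ ℕ) × Finset (Fin n)),
      (𝔖 : Set ((Fin n →₀ ℕ) × Finset (Fin n))).PairwiseDisjoint
        (fun p => stanleyPairSet p.1 p.2) ∧
      ⋃ p ∈ (𝔖 : Set ((Fin n →₀ ℕ) × Finset (Fin n))), stanleyPairSet p.1 p.2 = L := by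
  classical
  obtain ⟨N, hN⟩ := hL.exists_inf_mem_iff
  refine ⟨((Finset.Iic N).filter (· ∈ L)).image fun w => (w, saturatedCoords N w), ?_, ?_⟩
  · simp only [Finset.coe_image, Finset.coe_filter, Finset.mem_Iic]
    rintro _ ⟨w, ⟨hwN, -⟩, rfl⟩ _ ⟨w', ⟨hw'N, -⟩, rfl⟩ hne
    simp only [Function.onFun, stanleyPairSet_saturatedCoords hwN,
      stanleyPairSet_saturatedCoords hw'N]
    exact Set.disjoint_left.mpr fun z hz hz' => hne (by rw [show w = w' from hz.symm.trans hz'])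
  · ext z
    simp only [Finset.coe_image, Set.biUnion_image, Set.mem_iUnion₂, Finset.mem_coe,
      Finset.mem_filter, Finset.mem_Iic, exists_prop]
    constructor
    · rintro ⟨w, ⟨hwN, hwL⟩, hz⟩
      rw [stanleyPairSet_saturatedCoords hwN] at hz
      exact (hN z).mp (hz ▸ hwL)
    · intro hz
      refine ⟨z ⊓ N, ⟨inf_le_right, (hN z).mpr hz⟩, ?_⟩
      rw [stanleyPairSet_saturatedCoords inf_le_right]
      rfl

end Stanley

theorem exists_stanley_decomposition_general {k : Type} [Field k] {n : ℕ}
    (I : Ideal (MvPolynomial (Fin n) k)) :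
    ∃ 𝔖 : Finset ((Fin n →₀ ℕ) × Finset (Fin n)), IsStanleyDecomp I 𝔖 :=
  exists_stanley_partition_of_isLowerSet (isLowerSet_setOf_monomial_notMem I)

/-- every proper monomial ideal `I` in `S = k[x_1,…,x_n]` admits a finite
Stanley decomposition of `S/I`. -/
theorem exists_stanley_decomposition {k : Type} [Field k] {n : ℕ}
    (I : Ideal (MvPolynomial (Fin n) k)) (hmon : IsMonomialIdeal I) (hproper : I ≠ ⊤) :
    ∃ 𝔖 : Finset ((Fin n →₀ ℕ) × Finset (Fin n)), IsStanleyDecomp I 𝔖 :=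
  exists_stanley_decomposition_general I
end

section
/- Let I ⊊ S be a monomial ideal and let x_ℓ be a variable. If 𝔄 is a Stanley decomposition of S/(I + ⟨x_ℓ⟩) and 𝔅 is a Stanley decomposition of S/(I : x_ℓ), then 𝔄 ∪ {(x_ℓ·x^v, σ) : (x^v, σ) ∈ 𝔅} is a Stanley decomposition of S/I. -/
open MvPolynomial

/-! A monomial `x^w ∉ I` either has `w ℓ = 0`, and then lies outside `I + ⟨x_ℓ⟩`,
or is `x_ℓ · x^v` with `x^v ∉ (I : x_ℓ)`. The pairs of `𝔄` cover the first kind,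
the shifted pairs of `𝔅` the second, and shifting by `x_ℓ` is injective on exponents,
so disjointness survives. -/

section MonomialIdeal

variable {σ k : Type*} [CommSemiring k] [Nontrivial k]

theorem monomial_one_mem_span_monomial_iff {G : Set (σ →₀ ℕ)} {w : σ →₀ ℕ} :
    monomial w (1 : k) ∈ Ideal.span ((fun s => monomial s (1 : k)) '' G) ↔
      ∃ s ∈ G, s ≤ w := by
  classical
  simp [mem_ideal_span_monomial_image, support_monomial]

theorem monomial_one_mem_sup_span_X_iff {G : Set (σ →₀ ℕ)} {i : σ} {w : σ →₀ ℕ} :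
    monomial w (1 : k) ∈ Ideal.span ((fun s => monomial s (1 : k)) '' G) ⊔ Ideal.span {X i} ↔
      monomial w (1 : k) ∈ Ideal.span ((fun s => monomial s (1 : k)) '' G) ∨ w i ≠ 0 := by
  have hX : ({X i} : Set (MvPolynomial σ k)) =
      (fun s => monomial s (1 : k)) '' {Finsupp.single i 1} := by
    simp [X]
  rw [hX, ← Ideal.span_union, ← Set.image_union, monomial_one_mem_span_monomial_iff,
    monomial_one_mem_span_monomial_iff]
  simp [or_and_right, exists_or, Finsupp.single_le_iff, Nat.one_le_iff_ne_zero, or_comm]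

end MonomialIdeal

theorem monomial_mem_colon_span_X_iff {σ k : Type*} [CommSemiring k]
    (I : Ideal (MvPolynomial σ k)) (i : σ) (w : σ →₀ ℕ) (a : k) :
    monomial w a ∈ Submodule.colon I (Ideal.span {(X i : MvPolynomial σ k)}) ↔
      monomial (w + Finsupp.single i 1) a ∈ I := by
  rw [Ideal.mem_colon_span_singleton, X, monomial_mul, mul_one]

theorem range_add_single_one {σ : Type*} (i : σ) :
    Set.range (· + Finsupp.single i 1) = {w : σ →₀ ℕ | w i ≠ 0} := by
  ext w
  refine ⟨?_, fun hw => ⟨w - Finsupp.single i 1, tsub_add_cancel_of_le ?_⟩⟩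
  · rintro ⟨v, rfl⟩
    simp
  · exact Finsupp.single_le_iff.2 (Nat.one_le_iff_ne_zero.2 hw)

section StanleyDecomposition

variable {n : ℕ}

abbrev StanleyPair (n : ℕ) := (Fin n →₀ ℕ) × Finset (Fin n)

def stanleyCover (𝔖 : Finset (StanleyPair n)) : Set (Fin n →₀ ℕ) :=
  ⋃ p ∈ (𝔖 : Set (StanleyPair n)), stanleyPairSet p.1 p.2

theorem isStanleyDecomp_iff {k : Type} [Field k] (I : Ideal (MvPolynomial (Fin n) k))
    (𝔖 : Finset (StanleyPair n)) :
    IsStanleyDecomp I 𝔖 ↔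
      (𝔖 : Set (StanleyPair n)).PairwiseDisjoint (fun p => stanleyPairSet p.1 p.2) ∧
        stanleyCover 𝔖 = {w | monomial w (1 : k) ∉ I} :=
  Iff.rfl

theorem stanleyCover_union (𝔄 𝔅 : Finset (StanleyPair n)) :
    stanleyCover (𝔄 ∪ 𝔅) = stanleyCover 𝔄 ∪ stanleyCover 𝔅 := by
  rw [stanleyCover, Finset.coe_union, Set.biUnion_union, stanleyCover, stanleyCover]

theorem pairwiseDisjoint_union_of_disjoint_stanleyCover {𝔄 𝔅 : Finset (StanleyPair n)}
    (h𝔄 : (𝔄 : Set (StanleyPair n)).PairwiseDisjoint (fun p => stanleyPairSet p.1 p.2))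
    (h𝔅 : (𝔅 : Set (StanleyPair n)).PairwiseDisjoint (fun p => stanleyPairSet p.1 p.2))
    (h : Disjoint (stanleyCover 𝔄) (stanleyCover 𝔅)) :
    ((𝔄 ∪ 𝔅 : Finset (StanleyPair n)) : Set (StanleyPair n)).PairwiseDisjoint
      (fun p => stanleyPairSet p.1 p.2) := by
  rw [Finset.coe_union]
  exact h𝔄.union h𝔅 fun p hp q hq _ =>
    Set.disjoint_iUnion₂_right.1 (Set.disjoint_iUnion₂_left.1 h p hp) q hq

theorem stanleyPairSet_add_right (u e : Fin n →₀ ℕ) (τ : Finset (Fin n)) :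
    stanleyPairSet (u + e) τ = (· + e) '' stanleyPairSet u τ := by
  ext w
  constructor
  · rintro ⟨v, hv, rfl⟩
    exact ⟨u + v, ⟨v, hv, rfl⟩, add_right_comm _ _ _⟩
  · rintro ⟨_, ⟨v, hv, rfl⟩, rfl⟩
    exact ⟨v, hv, add_right_comm _ _ _⟩

variable (e : Fin n →₀ ℕ) {𝔖 : Finset (StanleyPair n)}

theorem pairwiseDisjoint_stanleyPairSet_image_add
    (h𝔖 : (𝔖 : Set (StanleyPair n)).PairwiseDisjoint (fun p => stanleyPairSet p.1 p.2)) :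
    ((𝔖.image fun p => (p.1 + e, p.2) : Finset (StanleyPair n)) :
      Set (StanleyPair n)).PairwiseDisjoint (fun p => stanleyPairSet p.1 p.2) := by
  have hinj : Function.Injective fun p : StanleyPair n => (p.1 + e, p.2) :=
    (add_left_injective e).prodMap Function.injective_id
  rw [Finset.coe_image, hinj.injOn.pairwiseDisjoint_image]
  intro p hp q hq hpq
  simp only [Function.onFun, Function.comp_apply, stanleyPairSet_add_right]
  exact (Set.disjoint_image_iff (add_left_injective e)).2 (h𝔖 hp hq hpq)

theorem stanleyCover_image_add :
    stanleyCover (𝔖.image fun p => (p.1 + e, p.2)) = (· + e) '' stanleyCover 𝔖 := by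
  simp only [stanleyCover, Finset.coe_image, Set.biUnion_image, stanleyPairSet_add_right,
    Set.image_iUnion₂]

end StanleyDecomposition

theorem stanley_decomposition_of_sum_and_colon_general {k : Type} [Field k] {n : ℕ}
    (I : Ideal (MvPolynomial (Fin n) k)) (hmon : IsMonomialIdeal I)
    (ℓ : Fin n) (𝔄 𝔅 : Finset ((Fin n →₀ ℕ) × Finset (Fin n)))
    (hA : IsStanleyDecomp (I ⊔ Ideal.span {(X ℓ : MvPolynomial (Fin n) k)}) 𝔄)
    (hB : IsStanleyDecomp
      (Submodule.colon I (Ideal.span {(X ℓ : MvPolynomial (Fin n) k)})) 𝔅) :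
    IsStanleyDecomp I
      (𝔄 ∪ 𝔅.image (fun p => (p.1 + Finsupp.single ℓ 1, p.2))) := by
  obtain ⟨G, hG⟩ := hmon
  rw [isStanleyDecomp_iff] at hA hB ⊢
  set e : Fin n →₀ ℕ := Finsupp.single ℓ 1
  set Y := {w | monomial w (1 : k) ∉ I}
  set Z := {w : Fin n →₀ ℕ | w ℓ = 0}
  have hA_cover : stanleyCover 𝔄 = Y ∩ Z := by
    rw [hA.2]
    ext w
    simp [Y, Z, hG, monomial_one_mem_sup_span_X_iff]
  have hB_cover : stanleyCover (𝔅.image fun p => (p.1 + e, p.2)) = Y ∩ Zᶜ := by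
    have hcolon : {w | monomial w (1 : k) ∉ Submodule.colon I
        (Ideal.span {(X ℓ : MvPolynomial (Fin n) k)})} = (· + e) ⁻¹' Y := by
      ext w
      exact not_congr (monomial_mem_colon_span_X_iff I ℓ w 1)
    rw [stanleyCover_image_add, hB.2, hcolon, Set.image_preimage_eq_inter_range,
      range_add_single_one]
    rfl
  refine ⟨pairwiseDisjoint_union_of_disjoint_stanleyCover hA.1
    (pairwiseDisjoint_stanleyPairSet_image_add _ hB.1) ?_, ?_⟩
  · rw [hA_cover, hB_cover]
    exact disjoint_compl_right.mono Set.inter_subset_right Set.inter_subset_right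
  · rw [stanleyCover_union, hA_cover, hB_cover, Set.inter_union_compl]

/-- if `𝔄` is a Stanley decomposition of `S/(I + ⟨x_ℓ⟩)` and `𝔅` is a Stanley
decomposition of `S/(I : x_ℓ)`, then `𝔄 ∪ {(x_ℓ·x^v, σ) : (x^v, σ) ∈ 𝔅}` is a Stanley
decomposition of `S/I`. -/
theorem stanley_decomposition_of_sum_and_colon {k : Type} [Field k] {n : ℕ}
    (I : Ideal (MvPolynomial (Fin n) k)) (hmon : IsMonomialIdeal I) (hproper : I ≠ ⊤)
    (ℓ : Fin n) (𝔄 𝔅 : Finset ((Fin n →₀ ℕ) × Finset (Fin n)))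
    (hA : IsStanleyDecomp (I ⊔ Ideal.span {(X ℓ : MvPolynomial (Fin n) k)}) 𝔄)
    (hB : IsStanleyDecomp
      (Submodule.colon I (Ideal.span {(X ℓ : MvPolynomial (Fin n) k)})) 𝔅) :
    IsStanleyDecomp I
      (𝔄 ∪ 𝔅.image (fun p => (p.1 + Finsupp.single ℓ 1, p.2))) :=
  stanley_decomposition_of_sum_and_colon_general I hmon ℓ 𝔄 𝔅 hA hB
end

section
/- Every proper monomial ideal I in the polynomial ring S = k[x_1,…,x_n] over a field k admits a Stanley filtration of S/I. -/
/-!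
The exponents of the monomials in `I` form an upper set `U ⊆ ℕⁿ`, and we decompose its complement
by induction on the variables. Slicing `U` along `x_a` gives upper sets `V_e = {w | w + e·eₐ ∈ U}`
increasing in `e`, which stabilise at some `d` by Dickson's lemma. The cones of `V_e` for `e < d`
are lifted with the exponent of `x_a` frozen at `e`, those of `V_d` with `x_a` free from degree `d`
on. Listed by increasing `e`, each cone has a frozen coordinate in which its base lies below the
base of every later cone, so no later base divides a monomial of an earlier cone; this is what
makes every prefix a Stanley decomposition of `S/(I + ⟨later bases⟩)`.
-/

open MvPolynomial

/-- A Stanley filtration of `S/I`: an ordered Stanley decomposition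
`(x^{u_1},σ_1),…,(x^{u_m},σ_m)` such that for every `1 ≤ j ≤ m` the first `j` pairs form a
Stanley decomposition of `S/(I + ⟨x^{u_{j+1}},…,x^{u_m}⟩)`. -/
def IsStanleyFiltration {k : Type} [Field k] {n : ℕ} (I : Ideal (MvPolynomial (Fin n) k))
    (L : List ((Fin n →₀ ℕ) × Finset (Fin n))) : Prop :=
  IsStanleyDecomp I L.toFinset ∧
  ∀ j : ℕ, 1 ≤ j → j ≤ L.length →
    IsStanleyDecomp
      (I ⊔ Ideal.span ((fun p : (Fin n →₀ ℕ) × Finset (Fin n) => monomial p.1 (1 : k)) ''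
        {p | p ∈ L.drop j}))
      (L.take j).toFinset

theorem monotone_chain_condition_isUpperSet {M : Type*} [AddCommMonoid M] [PartialOrder M]
    [CanonicallyOrderedAdd M] [WellQuasiOrderedLE M] (V : ℕ → Set M) (hmono : Monotone V)
    (hV : ∀ e, IsUpperSet (V e)) : ∃ d, ∀ e, d ≤ e → V e = V d := by
  let f : ℕ →o AddSemigroupIdeal M :=
    { toFun e := { carrier := V e, vadd_mem' := fun _ _ hx => hV _ le_add_self hx }
      monotone' := fun _ _ h => hmono h }
  obtain ⟨d, hd⟩ := WellFoundedGT.monotone_chain_condition f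
  exact ⟨d, fun e he => congrArg (fun J : AddSemigroupIdeal M => (J : Set M)) (hd e he).symm⟩

theorem isUpperSet_setOf_monomial_mem {σ R : Type*} [CommSemiring R]
    (I : Ideal (MvPolynomial σ R)) : IsUpperSet {w | monomial w (1 : R) ∈ I} := by
  intro u w hle hu
  obtain ⟨v, rfl⟩ := le_iff_exists_add.mp hle
  simpa [monomial_mul, add_comm] using I.mul_mem_left (monomial v 1) hu

variable {n : ℕ}

theorem monomial_mem_sup_span_iff {k : Type} [Field k] {I : Ideal (MvPolynomial (Fin n) k)}
    (hI : IsMonomialIdeal I) (B : Set (Fin n →₀ ℕ)) (w : Fin n →₀ ℕ) :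
    monomial w (1 : k) ∈ I ⊔ Ideal.span ((fun u => monomial u (1 : k)) '' B) ↔
      monomial w (1 : k) ∈ I ∨ ∃ b ∈ B, b ≤ w := by
  classical
  obtain ⟨G, rfl⟩ := hI
  simp only [← Ideal.span_union, ← Set.image_union, mem_ideal_span_monomial_image,
    support_monomial, one_ne_zero, if_false, Finset.mem_singleton, forall_eq, Set.mem_union]
  grind

theorem mem_stanleyPairSet_iff {u w : Fin n →₀ ℕ} {σ : Finset (Fin n)} :
    w ∈ stanleyPairSet u σ ↔ u ≤ w ∧ ∀ i ∉ σ, w i = u i := by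
  constructor
  · rintro ⟨v, hv, rfl⟩
    refine ⟨le_self_add, fun i hi => ?_⟩
    have : v i = 0 := by_contra fun h => hi (hv i h)
    simp [this]
  · rintro ⟨hle, hfix⟩
    refine ⟨w - u, fun i hi => by_contra fun hiσ => hi ?_, (add_tsub_cancel_of_le hle).symm⟩
    simp [hfix i hiσ]

/-- Coordinates outside `p.2` are frozen (constant) on the cone of `p`. -/
def FrozenBelow (p q : StanleyPair n) : Prop :=
  ∃ i ∉ p.2, p.1 i < q.1 i

variable {a : Fin n} {e : ℕ} {p q : StanleyPair n} {w : Fin n →₀ ℕ}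

theorem FrozenBelow.not_le_of_mem (h : FrozenBelow p q) (hw : w ∈ stanleyPairSet p.1 p.2) :
    ¬ q.1 ≤ w := by
  obtain ⟨i, hi, hlt⟩ := h
  intro hle
  have := hle i
  rw [(mem_stanleyPairSet_iff.mp hw).2 i hi] at this
  omega

theorem FrozenBelow.disjoint (h : FrozenBelow p q) :
    Disjoint (stanleyPairSet p.1 p.2) (stanleyPairSet q.1 q.2) :=
  Set.disjoint_left.mpr fun _ hp hq => h.not_le_of_mem hp (mem_stanleyPairSet_iff.mp hq).1

noncomputable def shiftPair (a : Fin n) (e : ℕ) (p : StanleyPair n) : StanleyPair n :=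
  (p.1 + Finsupp.single a e, p.2)

noncomputable def shiftFreePair (a : Fin n) (e : ℕ) (p : StanleyPair n) : StanleyPair n :=
  (p.1 + Finsupp.single a e, insert a p.2)

theorem mem_shiftPair_iff (hp₁ : p.1 a = 0) (hp₂ : a ∉ p.2) :
    w ∈ stanleyPairSet (shiftPair a e p).1 (shiftPair a e p).2 ↔
      w.erase a ∈ stanleyPairSet p.1 p.2 ∧ w a = e := by
  simp only [shiftPair, mem_stanleyPairSet_iff, Finsupp.le_def, Finsupp.add_apply,
    Finsupp.single_apply, Finsupp.erase_apply]
  constructor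
  · rintro ⟨hle, hfix⟩
    have hwa : w a = e := by simpa [hp₁] using hfix a hp₂
    exact ⟨⟨fun i => by grind, fun i hi => by grind⟩, hwa⟩
  · rintro ⟨⟨hle, hfix⟩, rfl⟩
    exact ⟨fun i => by grind, fun i hi => by grind⟩

theorem mem_shiftFreePair_iff (hp₁ : p.1 a = 0) :
    w ∈ stanleyPairSet (shiftFreePair a e p).1 (shiftFreePair a e p).2 ↔
      w.erase a ∈ stanleyPairSet p.1 p.2 ∧ e ≤ w a := by
  simp only [shiftFreePair, mem_stanleyPairSet_iff, Finsupp.le_def, Finsupp.add_apply,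
    Finsupp.single_apply, Finsupp.erase_apply]
  constructor
  · rintro ⟨hle, hfix⟩
    exact ⟨⟨fun i => by grind, fun i hi => by grind⟩, by simpa [hp₁] using hle a⟩
  · rintro ⟨⟨hle, hfix⟩, hwa⟩
    exact ⟨fun i => by grind, fun i hi => by grind⟩

theorem FrozenBelow.shift (h : FrozenBelow p q) (hq : q.1 a = 0) :
    FrozenBelow (shiftPair a e p) (shiftPair a e q) := by
  obtain ⟨i, hi, hlt⟩ := h
  have hia : i ≠ a := by rintro rfl; omega
  exact ⟨i, hi, by simpa [shiftPair, Finsupp.single_apply, hia.symm] using hlt⟩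

theorem FrozenBelow.shiftFree (h : FrozenBelow p q) (hq : q.1 a = 0) :
    FrozenBelow (shiftFreePair a e p) (shiftFreePair a e q) := by
  obtain ⟨i, hi, hlt⟩ := h
  have hia : i ≠ a := by rintro rfl; omega
  exact ⟨i, by simp [shiftFreePair, hi, hia], by
    simpa [shiftFreePair, Finsupp.single_apply, hia.symm] using hlt⟩

theorem frozenBelow_shiftPair_of_lt (hp₁ : p.1 a = 0) (hp₂ : a ∉ p.2) (h : e < q.1 a) :
    FrozenBelow (shiftPair a e p) q :=
  ⟨a, hp₂, by simpa [shiftPair, hp₁] using h⟩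

/-- A Stanley decomposition of the monomials supported in `τ` with exponent outside `U`, listed in
an order (`pairwise`) that makes every prefix a Stanley decomposition as well. -/
structure IsConeFiltration (τ : Finset (Fin n)) (U : Set (Fin n →₀ ℕ))
    (L : List (StanleyPair n)) : Prop where
  subset : ∀ p ∈ L, p.1.support ⊆ τ ∧ p.2 ⊆ τ
  pairwise : L.Pairwise FrozenBelow
  exists_mem_iff : ∀ w, (∃ p ∈ L, w ∈ stanleyPairSet p.1 p.2) ↔ w.support ⊆ τ ∧ w ∉ U

namespace IsConeFiltration

variable {τ : Finset (Fin n)} {U : Set (Fin n →₀ ℕ)} {L : List (StanleyPair n)}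

theorem apply_eq_zero_and_notMem (hL : IsConeFiltration τ U L) (ha : a ∉ τ) (hp : p ∈ L) :
    p.1 a = 0 ∧ a ∉ p.2 :=
  ⟨Finsupp.notMem_support_iff.mp fun h => ha ((hL.subset p hp).1 h),
    fun h => ha ((hL.subset p hp).2 h)⟩

theorem exists_mem_take_iff (hL : IsConeFiltration τ U L) (j : ℕ) (w : Fin n →₀ ℕ) :
    (∃ p ∈ L.take j, w ∈ stanleyPairSet p.1 p.2) ↔
      w.support ⊆ τ ∧ w ∉ U ∧ ∀ q ∈ L.drop j, ¬ q.1 ≤ w := by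
  have hcross : ∀ p ∈ L.take j, ∀ q ∈ L.drop j, FrozenBelow p q := by
    have := hL.pairwise
    rw [← List.take_append_drop j L, List.pairwise_append] at this
    exact this.2.2
  constructor
  · rintro ⟨p, hp, hw⟩
    obtain ⟨hτ, hU⟩ := (hL.exists_mem_iff w).mp ⟨p, List.mem_of_mem_take hp, hw⟩
    exact ⟨hτ, hU, fun q hq => (hcross p hp q hq).not_le_of_mem hw⟩
  · rintro ⟨hτ, hU, hq⟩
    obtain ⟨p, hp, hw⟩ := (hL.exists_mem_iff w).mpr ⟨hτ, hU⟩
    rw [← List.take_append_drop j L, List.mem_append] at hp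
    rcases hp with hp | hp
    · exact ⟨p, hp, hw⟩
    · exact absurd (mem_stanleyPairSet_iff.mp hw).1 (hq p hp)

end IsConeFiltration

theorem isStanleyDecomp_of_pairwise {k : Type} [Field k] {J : Ideal (MvPolynomial (Fin n) k)}
    {L : List (StanleyPair n)} (hpw : L.Pairwise FrozenBelow)
    (hmem : ∀ w, (∃ p ∈ L, w ∈ stanleyPairSet p.1 p.2) ↔ monomial w (1 : k) ∉ J) :
    IsStanleyDecomp J L.toFinset := by
  refine ⟨fun p hp q hq hpq => ?_, ?_⟩
  · have : Std.Symm fun p q : StanleyPair n =>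
        Disjoint (stanleyPairSet p.1 p.2) (stanleyPairSet q.1 q.2) := ⟨fun _ _ h => h.symm⟩
    exact (hpw.imp FrozenBelow.disjoint).forall (List.mem_toFinset.mp hp)
      (List.mem_toFinset.mp hq) hpq
  · ext w
    simpa using hmem w

def slice (U : Set (Fin n →₀ ℕ)) (a : Fin n) (e : ℕ) : Set (Fin n →₀ ℕ) :=
  {w | w + Finsupp.single a e ∈ U}

noncomputable def stackSlices (a : Fin n) (d : ℕ) (Ls : ℕ → List (StanleyPair n)) :
    List (StanleyPair n) :=
  (List.range d).flatMap (fun e => (Ls e).map (shiftPair a e)) ++ (Ls d).map (shiftFreePair a d)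

section stackSlices

variable {d : ℕ} {Ls : ℕ → List (StanleyPair n)}

theorem pairwise_stackSlices (hbase : ∀ e, ∀ p ∈ Ls e, p.1 a = 0 ∧ a ∉ p.2)
    (hpw : ∀ e, (Ls e).Pairwise FrozenBelow) :
    (stackSlices a d Ls).Pairwise FrozenBelow := by
  have hlt : ∀ e, ∀ p ∈ Ls e, ∀ q : StanleyPair n, e < q.1 a →
      FrozenBelow (shiftPair a e p) q := fun e p hp _ h =>
    frozenBelow_shiftPair_of_lt (hbase e p hp).1 (hbase e p hp).2 h
  simp only [stackSlices, List.pairwise_append, List.pairwise_flatMap, List.pairwise_map,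
    List.mem_flatMap, List.mem_map, List.mem_range]
  refine ⟨⟨fun e _ => (hpw e).imp_of_mem fun _ hq h => h.shift (hbase e _ hq).1, ?_⟩,
    (hpw d).imp_of_mem fun _ hq h => h.shiftFree (hbase d _ hq).1, ?_⟩
  · refine List.pairwise_lt_range.imp ?_
    rintro e e' hee' _ ⟨p, hp, rfl⟩ _ ⟨q, hq, rfl⟩
    exact hlt e p hp _ (by simp [shiftPair, (hbase e' q hq).1, hee'])
  · rintro _ ⟨e, he, p, hp, rfl⟩ _ ⟨q, hq, rfl⟩
    exact hlt e p hp _ (by simp [shiftFreePair, (hbase d q hq).1, he])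

theorem exists_mem_stackSlices_iff (hbase : ∀ e, ∀ p ∈ Ls e, p.1 a = 0 ∧ a ∉ p.2) :
    (∃ p ∈ stackSlices a d Ls, w ∈ stanleyPairSet p.1 p.2) ↔
      ∃ p ∈ Ls (min (w a) d), w.erase a ∈ stanleyPairSet p.1 p.2 := by
  simp only [stackSlices, List.mem_append, List.mem_flatMap, List.mem_map, List.mem_range]
  constructor
  · rintro ⟨_, ⟨e, he, p, hp, rfl⟩ | ⟨p, hp, rfl⟩, hw⟩
    · obtain ⟨hw', rfl⟩ := (mem_shiftPair_iff (hbase _ p hp).1 (hbase _ p hp).2).mp hw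
      exact ⟨p, by rwa [min_eq_left he.le], hw'⟩
    · obtain ⟨hw, hd⟩ := (mem_shiftFreePair_iff (hbase d p hp).1).mp hw
      exact ⟨p, by rwa [min_eq_right hd], hw⟩
  · rintro ⟨p, hp, hw⟩
    rcases lt_or_ge (w a) d with hd | hd
    · rw [min_eq_left hd.le] at hp
      exact ⟨_, Or.inl ⟨w a, hd, p, hp, rfl⟩,
        (mem_shiftPair_iff (hbase _ p hp).1 (hbase _ p hp).2).mpr ⟨hw, rfl⟩⟩
    · rw [min_eq_right hd] at hp
      exact ⟨_, Or.inr ⟨p, hp, rfl⟩, (mem_shiftFreePair_iff (hbase d p hp).1).mpr ⟨hw, hd⟩⟩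

theorem IsConeFiltration.stackSlices {s : Finset (Fin n)} {U : Set (Fin n →₀ ℕ)}
    (ha : a ∉ s) (hd : ∀ e, d ≤ e → slice U a e = slice U a d)
    (hLs : ∀ e, IsConeFiltration s (slice U a e) (Ls e)) :
    IsConeFiltration (insert a s) U (stackSlices a d Ls) := by
  have hbase : ∀ e, ∀ p ∈ Ls e, p.1 a = 0 ∧ a ∉ p.2 := fun e _ hp =>
    (hLs e).apply_eq_zero_and_notMem ha hp
  refine ⟨?_, pairwise_stackSlices hbase fun e => (hLs e).pairwise, fun w => ?_⟩
  · have hsupp : ∀ e, ∀ p ∈ Ls e, (p.1 + Finsupp.single a e).support ⊆ insert a s :=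
      fun e p hp => Finsupp.support_add.trans <| Finset.union_subset
        (((hLs e).subset p hp).1.trans (Finset.subset_insert a s))
        (Finsupp.support_single_subset.trans (by simp))
    simp only [_root_.stackSlices, List.mem_append, List.mem_flatMap, List.mem_map,
      List.mem_range]
    rintro _ (⟨e, -, p, hp, rfl⟩ | ⟨p, hp, rfl⟩)
    · exact ⟨hsupp e p hp, ((hLs e).subset p hp).2.trans (Finset.subset_insert a s)⟩
    · exact ⟨hsupp d p hp, Finset.insert_subset_insert a ((hLs d).subset p hp).2⟩
  · have hslice : slice U a (min (w a) d) = slice U a (w a) := by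
      rcases le_total (w a) d with h | h
      · rw [min_eq_left h]
      · rw [min_eq_right h, hd _ h]
    rw [exists_mem_stackSlices_iff hbase, (hLs _).exists_mem_iff, hslice, Finsupp.support_erase,
      ← Finset.subset_insert_iff]
    simp [slice, Finsupp.erase_add_single]

end stackSlices

theorem exists_isConeFiltration_empty (U : Set (Fin n →₀ ℕ)) :
    ∃ L, IsConeFiltration ∅ U L := by
  have hzero : ∀ w : Fin n →₀ ℕ, w.support ⊆ ∅ ↔ w = 0 := by simp
  by_cases h0 : (0 : Fin n →₀ ℕ) ∈ U
  · refine ⟨[], by simp, by simp, fun w => ?_⟩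
    simp only [List.not_mem_nil, false_and, exists_false, false_iff, hzero, not_and, not_not]
    rintro rfl
    exact h0
  · refine ⟨[(0, ∅)], by simp, by simp, fun w => ?_⟩
    have hcone : w ∈ stanleyPairSet 0 ∅ ↔ w = 0 := by
      simp [mem_stanleyPairSet_iff, Finsupp.ext_iff]
    simp only [List.mem_singleton, exists_eq_left, hcone, hzero]
    exact ⟨fun hw => ⟨hw, hw ▸ h0⟩, And.left⟩

theorem exists_isConeFiltration (τ : Finset (Fin n)) {U : Set (Fin n →₀ ℕ)}
    (hU : IsUpperSet U) : ∃ L, IsConeFiltration τ U L := by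
  induction τ using Finset.induction_on generalizing U with
  | empty => exact exists_isConeFiltration_empty U
  | @insert a s ha ih =>
    have hslice (e : ℕ) : IsUpperSet (slice U a e) := fun _ _ hle hw =>
      hU (add_le_add hle le_rfl) hw
    have hmono : Monotone (slice U a) := fun _ _ h _ hw =>
      hU (add_le_add le_rfl (Finsupp.single_mono h)) hw
    obtain ⟨d, hd⟩ := monotone_chain_condition_isUpperSet (slice U a) hmono hslice
    choose Ls hLs using fun e => ih (hslice e)
    exact ⟨_, IsConeFiltration.stackSlices ha hd hLs⟩

theorem exists_stanley_filtration_general {k : Type} [Field k] {n : ℕ}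
    (I : Ideal (MvPolynomial (Fin n) k)) (hmon : IsMonomialIdeal I) :
    ∃ L : List ((Fin n →₀ ℕ) × Finset (Fin n)), IsStanleyFiltration I L := by
  obtain ⟨L, hL⟩ := exists_isConeFiltration Finset.univ (isUpperSet_setOf_monomial_mem I)
  refine ⟨L, isStanleyDecomp_of_pairwise hL.pairwise fun w => ?_, fun j _ _ =>
    isStanleyDecomp_of_pairwise (hL.pairwise.sublist (List.take_sublist j L)) fun w => ?_⟩
  · simp [hL.exists_mem_iff]
  · rw [hL.exists_mem_take_iff, ← Set.image_image (fun u => monomial u (1 : k)) Prod.fst,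
      monomial_mem_sup_span_iff hmon]
    simp

/-- every proper monomial ideal `I` in `S = k[x_1,…,x_n]` admits a Stanley
filtration of `S/I`. -/
theorem exists_stanley_filtration {k : Type} [Field k] {n : ℕ}
    (I : Ideal (MvPolynomial (Fin n) k)) (hmon : IsMonomialIdeal I) (hproper : I ≠ ⊤) :
    ∃ L : List ((Fin n →₀ ℕ) × Finset (Fin n)), IsStanleyFiltration I L :=
  exists_stanley_filtration_general I hmon
end

section
/- Every proper monomial ideal I in S = k[x_1,…,x_n] admits a Stanley filtration (x^{u_1},σ_1),…,(x^{u_m},σ_m) of S/I in which the total degree |u_i| = u_{i,1} + … + u_{i,n} satisfies |u_i| ≤ i − 1 for every 1 ≤ i ≤ m. -/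
open MvPolynomial

open MvPolynomial

/-!
Choose finitely many generators `G` of exponents and induct on their total degree. If a variable
`x_i` occurs in some generator, the standard monomials `w` with `w_i = 0` are those of the
generators free of `x_i`, and the others are `x_i` times the standard monomials of `G / x_i`, whose
generators have smaller total degree. A filtration for the first family, with `i` erased from
every `σ`, followed by `x_i` times a filtration for the second family is again a filtration:

* no piece contains a multiple of a later corner `x^u`, which is what makes every prefix a Stanley
  decomposition of `S / (I + ⟨later corners⟩)`;
* the `a`-th corner has degree at most `a`: multiplying by `x_i` raises the degree by one and the
  index by the length of the first list, which is empty only if `I = S`, and then so is the second;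
* corners involve only variables occurring in `G`, so the corners of the first list have `u_i = 0`
  and erasing `i` from `σ` cuts their pieces exactly down to `w_i = 0`.
-/

namespace StanleyFiltration

theorem mem_upperClosure_image_tsub_iff {α : Type*} [Preorder α] [Add α] [Sub α] [OrderedSub α]
    {G : Set α} {e z : α} : z ∈ upperClosure ((· - e) '' G) ↔ z + e ∈ upperClosure G := by
  simp only [mem_upperClosure, Set.exists_mem_image, tsub_le_iff_right]

theorem mem_upperClosure_sep_apply_eq_zero_iff {σ : Type*} {G : Set (σ →₀ ℕ)} {i : σ}
    {w : σ →₀ ℕ} (hw : w i = 0) :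
    w ∈ upperClosure {g ∈ G | g i = 0} ↔ w ∈ upperClosure G := by
  simp only [mem_upperClosure, Set.mem_ofPred_eq, and_assoc]
  exact exists_congr fun g =>
    ⟨fun h => ⟨h.1, h.2.2⟩, fun h => ⟨h.1, Nat.eq_zero_of_le_zero (hw ▸ h.2 i), h.2⟩⟩

theorem monomial_one_mem_span_monomial_one_iff {σ k : Type*} [CommSemiring k] [Nontrivial k]
    {S : Set (σ →₀ ℕ)} {w : σ →₀ ℕ} :
    monomial w (1 : k) ∈ Ideal.span ((fun u => monomial u (1 : k)) '' S) ↔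
      w ∈ upperClosure S := by
  classical
  rw [mem_ideal_span_monomial_image, support_monomial, if_neg one_ne_zero]
  simp [mem_upperClosure]

theorem exists_finset_span_monomial_one_eq {σ k : Type*} [Finite σ] [CommRing k]
    [IsNoetherianRing k] [Nontrivial k]
    (G : Set (σ →₀ ℕ)) :
    ∃ G₀ : Finset (σ →₀ ℕ), Ideal.span ((fun u => monomial u (1 : k)) '' ↑G₀) =
      Ideal.span ((fun u => monomial u (1 : k)) '' G) := by
  obtain ⟨s, hsG, hspan⟩ :=
    (Submodule.fg_span_iff_fg_span_finset_subset _).1 (IsNoetherian.noetherian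
      (Ideal.span ((fun u => monomial u (1 : k)) '' G)))
  obtain ⟨G₀, -, hG₀⟩ := Set.subset_image_iff.1 hsG
  have hfin : G₀.Finite := Set.Finite.of_finite_image (hG₀ ▸ s.finite_toSet)
    (monomial_left_injective one_ne_zero).injOn
  exact ⟨hfin.toFinset, by rw [hfin.coe_toFinset, hG₀]; exact hspan.symm⟩

theorem sum_degree_filter_lt {σ : Type*} {G : Finset (σ →₀ ℕ)} {g : σ →₀ ℕ} {i : σ}
    (hg : g ∈ G) (hi : g i ≠ 0) :
    ∑ h ∈ G.filter (· i = 0), h.degree < ∑ h ∈ G, h.degree :=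
  Finset.sum_lt_sum_of_subset (Finset.filter_subset _ _) hg (by simp [hi])
    ((Nat.pos_of_ne_zero hi).trans_le (Finsupp.le_degree i g)) fun _ _ _ => Nat.zero_le _

theorem sum_degree_image_tsub_single_lt {σ : Type*} [DecidableEq σ] {G : Finset (σ →₀ ℕ)}
    {g : σ →₀ ℕ} {i : σ} (hg : g ∈ G) (hi : g i ≠ 0) :
    ∑ h ∈ G.image (· - Finsupp.single i 1), h.degree < ∑ h ∈ G, h.degree := by
  have hdeg : (g - Finsupp.single i 1).degree + 1 = g.degree := by
    have := congrArg Finsupp.degree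
      (tsub_add_cancel_of_le (Finsupp.single_le_iff.2 (Nat.one_le_iff_ne_zero.2 hi)))
    rwa [map_add, Finsupp.degree_single] at this
  calc ∑ h ∈ G.image (· - Finsupp.single i 1), h.degree
      ≤ ∑ h ∈ G, (h - Finsupp.single i 1).degree :=
        Finset.sum_image_le_of_nonneg fun _ _ => Nat.zero_le _
    _ < ∑ h ∈ G, h.degree :=
        Finset.sum_lt_sum (f := fun h => (h - Finsupp.single i 1).degree)
          (fun _ _ => Finsupp.degree_mono tsub_le_self) ⟨g, hg, by omega⟩

theorem apply_getElem_append_le {α : Type*} {f : α → ℕ} {l₁ l₂ : List α}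
    (h₁ : ∀ a (ha : a < l₁.length), f l₁[a] ≤ a)
    (h₂ : ∀ a (ha : a < l₂.length), f l₂[a] ≤ a + 1) (hnil : l₁ = [] → l₂ = []) :
    ∀ a (ha : a < (l₁ ++ l₂).length), f (l₁ ++ l₂)[a] ≤ a := by
  intro a ha
  rw [List.getElem_append]
  split_ifs with h
  · exact h₁ a h
  · have hl₁ : 0 < l₁.length := List.length_pos_iff.2 fun hl => by simp_all
    have := h₂ (a - l₁.length) (by simp at ha; omega)
    omega

variable {n : ℕ}

abbrev Pair (n : ℕ) := (Fin n →₀ ℕ) × Finset (Fin n)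

theorem self_mem_stanleyPairSet (u : Fin n →₀ ℕ) (σ : Finset (Fin n)) :
    u ∈ stanleyPairSet u σ :=
  ⟨0, by simp, by simp⟩

theorem le_of_mem_stanleyPairSet {u w : Fin n →₀ ℕ} {σ : Finset (Fin n)}
    (h : w ∈ stanleyPairSet u σ) : u ≤ w := by
  obtain ⟨v, -, rfl⟩ := h
  exact le_self_add

theorem stanleyPairSet_mono {u : Fin n →₀ ℕ} {σ τ : Finset (Fin n)} (h : σ ⊆ τ) :
    stanleyPairSet u σ ⊆ stanleyPairSet u τ := by
  rintro _ ⟨v, hv, rfl⟩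
  exact ⟨v, fun i hi => h (hv i hi), rfl⟩

def Pair.eraseVar (i : Fin n) (p : Pair n) : Pair n := (p.1, p.2.erase i)

noncomputable def Pair.mulVar (i : Fin n) (p : Pair n) : Pair n := (p.1 + Finsupp.single i 1, p.2)

theorem stanleyPairSet_eraseVar_subset (i : Fin n) (p : Pair n) :
    stanleyPairSet (p.eraseVar i).1 (p.eraseVar i).2 ⊆ stanleyPairSet p.1 p.2 :=
  stanleyPairSet_mono (Finset.erase_subset _ _)

theorem stanleyPairSet_eraseVar {i : Fin n} {p : Pair n} (hp : p.1 i = 0) :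
    stanleyPairSet (p.eraseVar i).1 (p.eraseVar i).2 =
      stanleyPairSet p.1 p.2 ∩ {w | w i = 0} := by
  ext w
  constructor
  · rintro ⟨v, hv, rfl⟩
    have hvi : v i = 0 := by_contra fun h => (Finset.mem_erase.1 (hv i h)).1 rfl
    exact ⟨⟨v, fun j hj => (Finset.mem_erase.1 (hv j hj)).2, rfl⟩,
      by simp [Pair.eraseVar, hp, hvi]⟩
  · rintro ⟨⟨v, hv, rfl⟩, hw⟩
    have hvi : v i = 0 := by simpa [hp] using hw
    exact ⟨v, fun j hj => Finset.mem_erase.2 ⟨by rintro rfl; exact hj hvi, hv j hj⟩, rfl⟩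

theorem stanleyPairSet_mulVar (i : Fin n) (p : Pair n) :
    stanleyPairSet (p.mulVar i).1 (p.mulVar i).2 =
      (· + Finsupp.single i 1) '' stanleyPairSet p.1 p.2 := by
  ext w
  constructor
  · rintro ⟨v, hv, rfl⟩
    exact ⟨p.1 + v, ⟨v, hv, rfl⟩, add_right_comm _ _ _⟩
  · rintro ⟨_, ⟨v, hv, rfl⟩, rfl⟩
    exact ⟨v, hv, add_right_comm _ _ _⟩

theorem mulVar_fst_apply_ne_zero (i : Fin n) (p : Pair n) : (p.mulVar i).1 i ≠ 0 := by
  simp [Pair.mulVar]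

def Precedes (p q : Pair n) : Prop :=
  ∀ w ∈ stanleyPairSet p.1 p.2, ¬ q.1 ≤ w

theorem Precedes.disjoint {p q : Pair n} (h : Precedes p q) :
    Disjoint (stanleyPairSet p.1 p.2) (stanleyPairSet q.1 q.2) :=
  Set.disjoint_left.2 fun _ hp hq => h _ hp (le_of_mem_stanleyPairSet hq)

theorem isStanleyDecomp_toFinset {k : Type} [Field k] {J : Ideal (MvPolynomial (Fin n) k)}
    {l : List (Pair n)} (hl : l.Pairwise Precedes)
    (hcover : ⋃ p ∈ l, stanleyPairSet p.1 p.2 = {w | monomial w (1 : k) ∉ J}) :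
    IsStanleyDecomp J l.toFinset :=
  ⟨fun _ hp _ hq => (hl.imp Precedes.disjoint).forall (List.mem_toFinset.1 hp)
    (List.mem_toFinset.1 hq), by simpa using hcover⟩

theorem pairwise_precedes_append_map {i : Fin n} {M L : List (Pair n)}
    (hMi : ∀ p ∈ M, p.1 i = 0) (hM : M.Pairwise Precedes) (hL : L.Pairwise Precedes) :
    (M.map (Pair.eraseVar i) ++ L.map (Pair.mulVar i)).Pairwise Precedes := by
  rw [List.pairwise_append, List.pairwise_map, List.pairwise_map]
  refine ⟨hM.imp fun h w hw => h w (stanleyPairSet_eraseVar_subset i _ hw),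
    hL.imp fun h w hw => ?_, ?_⟩
  · rw [stanleyPairSet_mulVar] at hw
    obtain ⟨z, hz, rfl⟩ := hw
    exact fun hle => h z hz (le_of_add_le_add_right hle)
  · simp only [List.mem_map]
    rintro _ ⟨p, hp, rfl⟩ _ ⟨q, -, rfl⟩ w hw hle
    rw [stanleyPairSet_eraseVar (hMi p hp)] at hw
    exact mulVar_fst_apply_ne_zero i q (Nat.eq_zero_of_le_zero (hw.2 ▸ hle i))

theorem iUnion_append_map {G : Set (Fin n →₀ ℕ)} {i : Fin n} {M L : List (Pair n)}
    (hMi : ∀ p ∈ M, p.1 i = 0)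
    (hM : ⋃ p ∈ M, stanleyPairSet p.1 p.2 = (upperClosure {g ∈ G | g i = 0} : Set _)ᶜ)
    (hL : ⋃ p ∈ L, stanleyPairSet p.1 p.2 =
      (upperClosure ((· - Finsupp.single i 1) '' G) : Set (Fin n →₀ ℕ))ᶜ) :
    ⋃ p ∈ M.map (Pair.eraseVar i) ++ L.map (Pair.mulVar i), stanleyPairSet p.1 p.2 =
      (upperClosure G : Set (Fin n →₀ ℕ))ᶜ := by
  ext w
  simp only [Set.ext_iff, Set.mem_iUnion, exists_prop, List.mem_append, List.mem_map,
    Set.mem_compl_iff, SetLike.mem_coe] at hM hL ⊢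
  by_cases hw : w i = 0
  · rw [← mem_upperClosure_sep_apply_eq_zero_iff hw, ← hM]
    constructor
    · rintro ⟨_, ⟨p, hp, rfl⟩ | ⟨q, -, rfl⟩, hwp⟩
      · exact ⟨p, hp, stanleyPairSet_eraseVar_subset i p hwp⟩
      · exact (mulVar_fst_apply_ne_zero i q
          (Nat.eq_zero_of_le_zero (hw ▸ le_of_mem_stanleyPairSet hwp i))).elim
    · rintro ⟨p, hp, hwp⟩
      exact ⟨_, Or.inl ⟨p, hp, rfl⟩,
        (stanleyPairSet_eraseVar (hMi p hp)).symm ▸ ⟨hwp, hw⟩⟩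
  · obtain ⟨z, rfl⟩ : ∃ z, w = z + Finsupp.single i 1 :=
      ⟨_, (tsub_add_cancel_of_le (Finsupp.single_le_iff.2 (Nat.one_le_iff_ne_zero.2 hw))).symm⟩
    rw [← mem_upperClosure_image_tsub_iff, ← hL]
    constructor
    · rintro ⟨_, ⟨p, hp, rfl⟩ | ⟨q, hq, rfl⟩, hwp⟩
      · rw [stanleyPairSet_eraseVar (hMi p hp)] at hwp
        exact (hw hwp.2).elim
      · rw [stanleyPairSet_mulVar] at hwp
        obtain ⟨z', hz', hzz⟩ := hwp
        exact ⟨q, hq, add_right_cancel hzz ▸ hz'⟩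
    · rintro ⟨q, hq, hzq⟩
      exact ⟨_, Or.inr ⟨q, hq, rfl⟩, (stanleyPairSet_mulVar i q).symm ▸ ⟨z, hzq, rfl⟩⟩

structure IsDegreeBoundedFiltration (G : Set (Fin n →₀ ℕ)) (L : List (Pair n)) : Prop where
  pairwise_precedes : L.Pairwise Precedes
  iUnion_eq : ⋃ p ∈ L, stanleyPairSet p.1 p.2 = (upperClosure G : Set (Fin n →₀ ℕ))ᶜ
  degree_le : ∀ a (ha : a < L.length), L[a].1.degree ≤ a
  apply_eq_zero : ∀ p ∈ L, ∀ i, (∀ g ∈ G, g i = 0) → p.1 i = 0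

theorem isDegreeBoundedFiltration_nil {G : Set (Fin n →₀ ℕ)} (h0 : 0 ∈ G) :
    IsDegreeBoundedFiltration G [] where
  pairwise_precedes := List.Pairwise.nil
  iUnion_eq := by
    simpa [eq_comm (a := ∅), Set.eq_univ_iff_forall, mem_upperClosure] using
      fun _ => ⟨0, h0, zero_le⟩
  degree_le := by simp
  apply_eq_zero := by simp

theorem isDegreeBoundedFiltration_empty :
    IsDegreeBoundedFiltration (∅ : Set (Fin n →₀ ℕ)) [(0, Finset.univ)] where
  pairwise_precedes := List.pairwise_singleton _ _
  iUnion_eq := by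
    ext w
    simpa using ⟨w, by simp, (zero_add w).symm⟩
  degree_le := by simp
  apply_eq_zero := by simp

namespace IsDegreeBoundedFiltration

variable {G : Set (Fin n →₀ ℕ)} {L : List (Pair n)}

theorem eq_nil_iff (hL : IsDegreeBoundedFiltration G L) : L = [] ↔ 0 ∈ G := by
  constructor
  · rintro rfl
    have h0 : (0 : Fin n →₀ ℕ) ∈ upperClosure G := by
      simpa using (Set.ext_iff.1 hL.iUnion_eq 0)
    obtain ⟨g, hg, hle⟩ := mem_upperClosure.1 h0
    rwa [nonpos_iff_eq_zero.1 hle] at hg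
  · intro h0
    refine List.eq_nil_iff_forall_not_mem.2 fun p hp => ?_
    have hmem : p.1 ∈ ⋃ p ∈ L, stanleyPairSet p.1 p.2 :=
      Set.mem_iUnion₂.2 ⟨p, hp, self_mem_stanleyPairSet p.1 p.2⟩
    rw [hL.iUnion_eq] at hmem
    exact hmem (mem_upperClosure.2 ⟨0, h0, zero_le⟩)

theorem iUnion_take (hL : IsDegreeBoundedFiltration G L) (j : ℕ) :
    ⋃ p ∈ L.take j, stanleyPairSet p.1 p.2 =
      (upperClosure (G ∪ Prod.fst '' {p | p ∈ L.drop j}) : Set (Fin n →₀ ℕ))ᶜ := by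
  have hcross : ∀ p ∈ L.take j, ∀ q ∈ L.drop j, Precedes p q := by
    have := hL.pairwise_precedes
    rw [← List.take_append_drop j L, List.pairwise_append] at this
    exact this.2.2
  have hcover := Set.ext_iff.1 hL.iUnion_eq
  ext w
  simp only [Set.mem_iUnion, exists_prop, Set.mem_compl_iff, SetLike.mem_coe, mem_upperClosure,
    Set.mem_union, Set.mem_image, Set.mem_ofPred_eq] at hcover ⊢
  constructor
  · rintro ⟨p, hp, hw⟩ ⟨g, hg | ⟨q, hq, rfl⟩, hle⟩
    · exact (hcover w).1 ⟨p, List.mem_of_mem_take hp, hw⟩ ⟨g, hg, hle⟩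
    · exact hcross p hp q hq w hw hle
  · intro hw
    obtain ⟨p, hp, hwp⟩ := (hcover w).2 fun ⟨g, hg, hle⟩ => hw ⟨g, Or.inl hg, hle⟩
    rw [← List.take_append_drop j L, List.mem_append] at hp
    refine hp.elim (fun hp => ⟨p, hp, hwp⟩) fun hp => ?_
    exact (hw ⟨p.1, Or.inr ⟨p, hp, rfl⟩, le_of_mem_stanleyPairSet hwp⟩).elim

theorem append_map {i : Fin n} (hi : ∃ g ∈ G, g i ≠ 0) {M L' : List (Pair n)}
    (hM : IsDegreeBoundedFiltration {g ∈ G | g i = 0} M)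
    (hL' : IsDegreeBoundedFiltration ((· - Finsupp.single i 1) '' G) L') :
    IsDegreeBoundedFiltration G (M.map (Pair.eraseVar i) ++ L'.map (Pair.mulVar i)) := by
  have hMi : ∀ p ∈ M, p.1 i = 0 := fun p hp => hM.apply_eq_zero p hp i fun _ hg => hg.2
  refine ⟨pairwise_precedes_append_map hMi hM.pairwise_precedes hL'.pairwise_precedes,
    iUnion_append_map hMi hM.iUnion_eq hL'.iUnion_eq, ?_, ?_⟩
  · refine apply_getElem_append_le (f := fun p : Pair n => p.1.degree) ?_ ?_ ?_
    · simpa [Pair.eraseVar] using hM.degree_le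
    · simpa [Pair.mulVar] using hL'.degree_le
    · intro hnil
      rw [List.map_eq_nil_iff, hM.eq_nil_iff] at hnil
      rw [List.map_eq_nil_iff, hL'.eq_nil_iff]
      exact ⟨0, hnil.1, zero_tsub _⟩
  · simp only [List.mem_append, List.mem_map]
    rintro _ (⟨p, hp, rfl⟩ | ⟨q, hq, rfl⟩) j hj
    · exact hM.apply_eq_zero p hp j fun g hg => hj g hg.1
    · obtain ⟨g, hg, hgi⟩ := hi
      have hji : j ≠ i := by rintro rfl; exact hgi (hj g hg)
      have hq := hL'.apply_eq_zero q hq j fun _ ⟨g, hg, hge⟩ => by simp [← hge, hj g hg, hji]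
      simp [Pair.mulVar, hq, hji]

theorem isStanleyFiltration {k : Type} [Field k] (hL : IsDegreeBoundedFiltration G L) :
    IsStanleyFiltration (Ideal.span ((fun u => monomial u (1 : k)) '' G)) L := by
  have hprefix : ∀ j, IsStanleyDecomp (Ideal.span ((fun u => monomial u (1 : k)) '' G) ⊔
      Ideal.span ((fun p : Pair n => monomial p.1 (1 : k)) '' {p | p ∈ L.drop j}))
      (L.take j).toFinset := by
    intro j
    refine isStanleyDecomp_toFinset (hL.pairwise_precedes.sublist (List.take_sublist j L)) ?_
    rw [hL.iUnion_take j, ← Set.image_image (fun u => monomial u (1 : k)) Prod.fst,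
      ← Ideal.span_union, ← Set.image_union]
    ext w
    simp [monomial_one_mem_span_monomial_one_iff]
  refine ⟨?_, fun j _ _ => hprefix j⟩
  simpa using hprefix L.length

end IsDegreeBoundedFiltration

theorem exists_isDegreeBoundedFiltration (G : Finset (Fin n →₀ ℕ)) :
    ∃ L, IsDegreeBoundedFiltration (G : Set (Fin n →₀ ℕ)) L := by
  by_cases hG : ∃ g ∈ G, ∃ i, g i ≠ 0
  · obtain ⟨g, hg, i, hi⟩ := hG
    obtain ⟨M, hM⟩ := exists_isDegreeBoundedFiltration (G.filter (· i = 0))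
    obtain ⟨L, hL⟩ := exists_isDegreeBoundedFiltration (G.image (· - Finsupp.single i 1))
    rw [Finset.coe_filter] at hM
    rw [Finset.coe_image] at hL
    exact ⟨_, hM.append_map ⟨g, hg, hi⟩ hL⟩
  · push Not at hG
    by_cases h0 : (0 : Fin n →₀ ℕ) ∈ G
    · exact ⟨[], isDegreeBoundedFiltration_nil h0⟩
    · have hG₀ : G = ∅ := Finset.eq_empty_of_forall_notMem fun g hg =>
        h0 ((Finsupp.ext (hG g hg) : g = 0) ▸ hg)
      exact ⟨_, by rw [hG₀, Finset.coe_empty]; exact isDegreeBoundedFiltration_empty⟩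
termination_by ∑ g ∈ G, g.degree
decreasing_by
  · exact sum_degree_filter_lt hg hi
  · exact sum_degree_image_tsub_single_lt hg hi

end StanleyFiltration

-- Indices are 0-based, so the paper's bound `|u_i| ≤ i - 1` for `1 ≤ i ≤ m` reads `≤ i`.
theorem exists_stanley_filtration_degree_bound_general {k : Type} [Field k] {n : ℕ}
    (I : Ideal (MvPolynomial (Fin n) k)) (hmon : IsMonomialIdeal I) :
    ∃ (m : ℕ) (f : Fin m → (Fin n →₀ ℕ) × Finset (Fin n)),
      IsStanleyFiltration I (List.ofFn f) ∧
      ∀ i : Fin m, (∑ t : Fin n, (f i).1 t) ≤ (i : ℕ) := by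
  obtain ⟨G, rfl⟩ := hmon
  obtain ⟨G₀, hG₀⟩ := StanleyFiltration.exists_finset_span_monomial_one_eq (k := k) G
  obtain ⟨L, hL⟩ := StanleyFiltration.exists_isDegreeBoundedFiltration G₀
  refine ⟨L.length, L.get, ?_, fun i => ?_⟩
  · rw [List.ofFn_get, ← hG₀]
    exact hL.isStanleyFiltration
  · simpa [Finsupp.degree_eq_sum] using hL.degree_le i i.2

/-- every proper monomial ideal admits a Stanley filtration
`(x^{u_1},σ_1),…,(x^{u_m},σ_m)` with `|u_i| ≤ i - 1` for every `1 ≤ i ≤ m`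
(here stated with 0-based indices `i : Fin m`, so the bound reads `|u_i| ≤ i`). -/
theorem exists_stanley_filtration_degree_bound {k : Type} [Field k] {n : ℕ}
    (I : Ideal (MvPolynomial (Fin n) k)) (hmon : IsMonomialIdeal I) (hproper : I ≠ ⊤) :
    ∃ (m : ℕ) (f : Fin m → (Fin n →₀ ℕ) × Finset (Fin n)),
      IsStanleyFiltration I (List.ofFn f) ∧
      ∀ i : Fin m, (∑ t : Fin n, (f i).1 t) ≤ (i : ℕ) :=
  exists_stanley_filtration_degree_bound_general I hmon
end

section
/- If 𝔖 is a Stanley decomposition of S/I for a monomial ideal I ⊊ S, then I = ⋂_{(x^u,σ) ∈ 𝔖} ⟨x_i^{u_i+1} : i ∉ σ⟩, where for a pair (x^u,σ) the ideal ⟨x_i^{u_i+1} : i ∉ σ⟩ is generated by the (u_i+1)-st powers of the variables x_i with i outside σ (the zero ideal when σ = {1,…,n}). -/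
open MvPolynomial

/-- a Stanley decomposition `𝔖` of `S/I` yields the primary decomposition
`I = ⋂_{(x^u,σ) ∈ 𝔖} ⟨x_i^{u_i+1} : i ∉ σ⟩`. -/
theorem stanley_decomposition_primary_decomposition {k : Type} [Field k] {n : ℕ}
    (I : Ideal (MvPolynomial (Fin n) k)) (hmon : IsMonomialIdeal I) (hproper : I ≠ ⊤)
    (𝔖 : Finset ((Fin n →₀ ℕ) × Finset (Fin n))) (hS : IsStanleyDecomp I 𝔖) :
    I = ⨅ p ∈ 𝔖,
      Ideal.span ((fun i => (X i : MvPolynomial (Fin n) k) ^ (p.1 i + 1)) '' {i | i ∉ p.2}) := by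
  obtain ⟨G, hG⟩ := hmon
  -- membership in I
  have hmemI : ∀ f : MvPolynomial (Fin n) k,
      f ∈ I ↔ ∀ w ∈ f.support, ∃ u ∈ G, u ≤ w := by
    intro f
    rw [hG, mem_ideal_span_monomial_image]
  have hmono : ∀ w : Fin n →₀ ℕ, (monomial w (1 : k)) ∈ I ↔ ∃ u ∈ G, u ≤ w := by
    intro w
    rw [hmemI]
    simp [support_monomial, (one_ne_zero : (1 : k) ≠ 0)]
  -- membership in J p
  have hJ : ∀ (p : (Fin n →₀ ℕ) × Finset (Fin n)) (f : MvPolynomial (Fin n) k),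
      f ∈ Ideal.span ((fun i => (X i : MvPolynomial (Fin n) k) ^ (p.1 i + 1)) '' {i | i ∉ p.2})
        ↔ ∀ w ∈ f.support, ∃ i ∉ p.2, p.1 i + 1 ≤ w i := by
    intro p f
    have himg : ((fun i => (X i : MvPolynomial (Fin n) k) ^ (p.1 i + 1)) '' {i | i ∉ p.2})
        = ((fun s => monomial s (1 : k)) ''
            ((fun i => Finsupp.single i (p.1 i + 1)) '' {i | i ∉ p.2})) := by
      rw [Set.image_image]
      apply Set.image_congr
      intro i _
      exact X_pow_eq_monomial
    rw [himg, mem_ideal_span_monomial_image]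
    constructor
    · intro h w hw
      obtain ⟨si, hsi, hle⟩ := h w hw
      obtain ⟨i, hi, rfl⟩ := hsi
      exact ⟨i, hi, Finsupp.single_le_iff.mp hle⟩
    · intro h w hw
      obtain ⟨i, hi, hle⟩ := h w hw
      exact ⟨Finsupp.single i (p.1 i + 1), ⟨i, hi, rfl⟩, Finsupp.single_le_iff.mpr hle⟩
  -- the key pointwise equivalence
  have key : ∀ w : Fin n →₀ ℕ,
      (∃ u ∈ G, u ≤ w) ↔ ∀ p ∈ 𝔖, ∃ i ∉ p.2, p.1 i + 1 ≤ w i := by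
    intro w
    constructor
    · rintro ⟨u, huG, huw⟩ p hp
      by_contra hcon
      push_neg at hcon
      -- so for all i ∉ p.2, w i ≤ p.1 i
      have hle : ∀ i ∉ p.2, w i ≤ p.1 i := fun i hi =>
        Nat.lt_succ_iff.mp (hcon i hi)
      set v : Fin n →₀ ℕ := Finsupp.filter (· ∈ p.2) (w - p.1) with hv
      have hw' : (p.1 + v) ∈ stanleyPairSet p.1 p.2 := by
        refine ⟨v, ?_, rfl⟩
        intro i hvi
        by_contra hi
        apply hvi
        rw [hv, Finsupp.filter_apply, if_neg hi]
      have hwle : w ≤ p.1 + v := by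
        rw [Finsupp.le_def]
        intro i
        rw [Finsupp.add_apply, hv, Finsupp.filter_apply]
        by_cases hi : i ∈ p.2
        · rw [if_pos hi, Finsupp.tsub_apply]
          exact le_add_tsub
        · rw [if_neg hi]
          exact Nat.le_add_right_of_le (hle i hi)
      have hnotI : monomial (p.1 + v) (1 : k) ∉ I := by
        have : (p.1 + v) ∈ (⋃ q ∈ (𝔖 : Set ((Fin n →₀ ℕ) × Finset (Fin n))),
            stanleyPairSet q.1 q.2) := Set.mem_biUnion hp hw'
        rw [hS.2] at this
        exact this
      exact hnotI ((hmono _).mpr ⟨u, huG, le_trans huw hwle⟩)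
    · intro h
      by_contra hcon
      have hnotI : monomial w (1 : k) ∉ I := fun hds => hcon ((hmono w).mp hds)
      have : w ∈ (⋃ q ∈ (𝔖 : Set ((Fin n →₀ ℕ) × Finset (Fin n))),
          stanleyPairSet q.1 q.2) := by
        rw [hS.2]; exact hnotI
      obtain ⟨p, hp, v, hvsupp, rfl⟩ := Set.mem_iUnion₂.mp this
      obtain ⟨i, hi, hle⟩ := h p hp
      rw [Finsupp.add_apply] at hle
      have : v i ≠ 0 := by omega
      exact hi (hvsupp i this)
  ext f
  simp only [Ideal.mem_iInf]
  rw [hmemI]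
  constructor
  · intro h p hp
    rw [hJ]
    intro w hw
    exact (key w).mp (h w hw) p hp
  · intro h w hw
    rw [key w]
    intro p hp
    exact (hJ p f).mp (h p hp) w hw
end

section
/- Let (x^{u_1},σ_1),…,(x^{u_m},σ_m) be a Stanley filtration of S/I for a monomial ideal I ⊊ S. Then for every 1 ≤ j ≤ m, the colon ideal ((I + ⟨x^{u_{j+1}},…,x^{u_m}⟩) : x^{u_j}) equals the prime ideal ⟨x_i : i ∉ σ_j⟩. In particular (I : x^{u_m}) = ⟨x_i : i ∉ σ_m⟩. -/
open MvPolynomial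

open MvPolynomial

/-!
The first `j + 1` pairs decompose `S/J` with `J = I + ⟨x^{u_{j+1}}, …, x^{u_m}⟩`. Hence every
monomial `x^{u_j + v}` with `supp v ⊆ σ_j` avoids `J`, while `x_i x^{u_j}` for `i ∉ σ_j` lies
in `J`: it is not in the `j`-th pair, and the earlier pairs avoid `J + ⟨x^{u_j}⟩`. Since `J` is
a monomial ideal, these two facts force `(J : x^{u_j}) = ⟨x_i : i ∉ σ_j⟩`.
-/

theorem List.setOf_mem_drop_ofFn {α : Type*} {m : ℕ} (f : Fin m → α) (t : ℕ) :
    {p | p ∈ (List.ofFn f).drop t} = f '' {i | t ≤ (i : ℕ)} := by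
  ext p
  simp only [Set.mem_ofPred_eq, Set.mem_image, List.mem_drop_iff_getElem, List.getElem_ofFn,
    List.length_ofFn]
  constructor
  · rintro ⟨i, hi, rfl⟩
    exact ⟨⟨t + i, by omega⟩, by simp, rfl⟩
  · rintro ⟨i, hi, rfl⟩
    exact ⟨i - t, by omega, congrArg f (Fin.ext (by simp; omega))⟩

theorem add_mem_stanleyPairSet_iff {n : ℕ} {u v : Fin n →₀ ℕ} {σ : Finset (Fin n)} :
    u + v ∈ stanleyPairSet u σ ↔ ∀ i, v i ≠ 0 → i ∈ σ := by
  simp [stanleyPairSet]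

namespace IsMonomialIdeal

variable {k : Type} [Field k] {n : ℕ} {I J : Ideal (MvPolynomial (Fin n) k)}

theorem span_monomial_image {ι : Type*} (g : ι → Fin n →₀ ℕ) (s : Set ι) :
    IsMonomialIdeal (Ideal.span ((fun i => monomial (g i) (1 : k)) '' s)) :=
  ⟨g '' s, by rw [Set.image_image]⟩

theorem sup (hI : IsMonomialIdeal I) (hJ : IsMonomialIdeal J) : IsMonomialIdeal (I ⊔ J) := by
  obtain ⟨G, rfl⟩ := hI
  obtain ⟨H, rfl⟩ := hJ
  exact ⟨G ∪ H, by rw [Set.image_union, Ideal.span_union]⟩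

theorem monomial_mem_of_mem_support (hI : IsMonomialIdeal I) {q : MvPolynomial (Fin n) k}
    (hq : q ∈ I) {w : Fin n →₀ ℕ} (hw : w ∈ q.support) : monomial w (1 : k) ∈ I := by
  obtain ⟨G, rfl⟩ := hI
  obtain ⟨g, hg, hle⟩ := mem_ideal_span_monomial_image.1 hq w hw
  refine mem_ideal_span_monomial_image.2 fun w' hw' => ⟨g, hg, ?_⟩
  rwa [Finset.mem_singleton.1 (support_monomial_subset hw')]

theorem colon_monomial_eq_span_X (hI : IsMonomialIdeal I) {u : Fin n →₀ ℕ}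
    {σ : Finset (Fin n)} (hfree : ∀ w ∈ stanleyPairSet u σ, monomial w (1 : k) ∉ I)
    (hbound : ∀ i ∉ σ, X i * monomial u (1 : k) ∈ I) :
    Submodule.colon I (Ideal.span {monomial u (1 : k)}) = Ideal.span (X '' {i | i ∉ σ}) := by
  apply le_antisymm
  · intro q hq
    rw [Ideal.mem_colon_span_singleton] at hq
    refine mem_ideal_span_X_image.2 fun w hw => ?_
    by_contra! hσ
    refine hfree (u + w)
      (add_mem_stanleyPairSet_iff.2 fun i hi => of_not_not fun h => hi (hσ i h))
      (hI.monomial_mem_of_mem_support hq ?_)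
    rw [add_comm, mem_support_iff, coeff_mul_monomial, mul_one]
    exact mem_support_iff.1 hw
  · rw [Ideal.span_le]
    rintro _ ⟨i, hi, rfl⟩
    exact Ideal.mem_colon_span_singleton.2 (hbound i hi)

end IsMonomialIdeal

namespace IsStanleyDecomp

variable {k : Type} [Field k] {n : ℕ} {I : Ideal (MvPolynomial (Fin n) k)}
  {𝔖 : Finset ((Fin n →₀ ℕ) × Finset (Fin n))}

theorem stanleyPairSet_subset (hd : IsStanleyDecomp I 𝔖) {p : (Fin n →₀ ℕ) × Finset (Fin n)}
    (hp : p ∈ 𝔖) : stanleyPairSet p.1 p.2 ⊆ {w | monomial w (1 : k) ∉ I} :=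
  hd.2 ▸ Set.subset_biUnion_of_mem (u := fun p => stanleyPairSet p.1 p.2) (Finset.mem_coe.2 hp)

theorem exists_mem_stanleyPairSet (hd : IsStanleyDecomp I 𝔖) {w : Fin n →₀ ℕ}
    (hw : monomial w (1 : k) ∉ I) : ∃ p ∈ 𝔖, w ∈ stanleyPairSet p.1 p.2 := by
  have hw' : w ∈ {w | monomial w (1 : k) ∉ I} := hw
  rw [← hd.2] at hw'
  simpa using hw'

end IsStanleyDecomp

section StanleyFiltration

variable {k : Type} [Field k] {n : ℕ} {I : Ideal (MvPolynomial (Fin n) k)}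
  {L : List ((Fin n →₀ ℕ) × Finset (Fin n))}

/-- `I + ⟨x^u : (x^u, σ) ∈ L.drop t⟩`, the ideal whose quotient is decomposed by `L.take t`. -/
noncomputable def stanleyTailIdeal (I : Ideal (MvPolynomial (Fin n) k))
    (L : List ((Fin n →₀ ℕ) × Finset (Fin n))) (t : ℕ) : Ideal (MvPolynomial (Fin n) k) :=
  I ⊔ Ideal.span ((fun p : (Fin n →₀ ℕ) × Finset (Fin n) => monomial p.1 (1 : k)) ''
    {p | p ∈ L.drop t})

theorem IsMonomialIdeal.stanleyTailIdeal (hI : IsMonomialIdeal I) (t : ℕ) :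
    IsMonomialIdeal (stanleyTailIdeal I L t) :=
  hI.sup (IsMonomialIdeal.span_monomial_image _ _)

theorem monomial_mem_stanleyTailIdeal {j : ℕ} (hj : j < L.length) :
    monomial L[j].1 (1 : k) ∈ stanleyTailIdeal I L j := by
  refine Submodule.mem_sup_right (Ideal.subset_span ⟨L[j], ?_, rfl⟩)
  rw [Set.mem_ofPred_eq, List.drop_eq_getElem_cons hj]
  exact List.mem_cons_self

namespace IsStanleyFiltration

theorem X_mul_monomial_mem (hf : IsStanleyFiltration I L) {j : ℕ} (hj : j < L.length)
    {i : Fin n} (hi : i ∉ L[j].2) :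
    X i * monomial L[j].1 (1 : k) ∈ stanleyTailIdeal I L (j + 1) := by
  have hX : X i * monomial L[j].1 (1 : k) = monomial (L[j].1 + Finsupp.single i 1) 1 := by
    rw [X, monomial_mul, one_mul, add_comm]
  by_contra hnot
  rw [hX] at hnot
  obtain ⟨p, hp, hw⟩ := (hf.2 (j + 1) (by omega) hj).exists_mem_stanleyPairSet hnot
  rw [List.mem_toFinset, List.take_add_one, List.getElem?_eq_getElem hj, List.mem_append,
    Option.toList_some, List.mem_singleton] at hp
  rcases hp with hp | rfl
  · -- the earlier pairs avoid `I + ⟨x^{u_j}, x^{u_{j+1}}, …⟩`, which contains `x_i x^{u_j}`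
    have hj0 : 1 ≤ j := Nat.one_le_iff_ne_zero.2 fun h => by simp [h] at hp
    refine (hf.2 j hj0 hj.le).stanleyPairSet_subset (List.mem_toFinset.2 hp) hw ?_
    rw [← hX]
    exact Ideal.mul_mem_left _ _ (monomial_mem_stanleyTailIdeal hj)
  · exact hi (add_mem_stanleyPairSet_iff.1 hw i (by simp))

theorem colon_eq_span_X (hI : IsMonomialIdeal I) (hf : IsStanleyFiltration I L) {j : ℕ}
    (hj : j < L.length) :
    Submodule.colon (stanleyTailIdeal I L (j + 1)) (Ideal.span {monomial L[j].1 (1 : k)}) =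
      Ideal.span (X '' {i | i ∉ L[j].2}) := by
  refine (hI.stanleyTailIdeal _).colon_monomial_eq_span_X ?_ fun _ => hf.X_mul_monomial_mem hj
  refine (hf.2 (j + 1) (by omega) hj).stanleyPairSet_subset (List.mem_toFinset.2 ?_)
  exact List.mem_take_iff_getElem.2 ⟨j, by omega, rfl⟩

end IsStanleyFiltration

end StanleyFiltration

theorem stanley_filtration_colon_prime_general {k : Type} [Field k] {n : ℕ}
    (I : Ideal (MvPolynomial (Fin n) k)) (hmon : IsMonomialIdeal I)
    {m : ℕ} (f : Fin m → (Fin n →₀ ℕ) × Finset (Fin n))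
    (hf : IsStanleyFiltration I (List.ofFn f)) :
    ∀ j : Fin m,
      Submodule.colon
        (I ⊔ Ideal.span ((fun i : Fin m => monomial (f i).1 (1 : k)) '' {i | (j : ℕ) < (i : ℕ)}))
        (Ideal.span {monomial (f j).1 (1 : k)})
      = Ideal.span ((fun i => (X i : MvPolynomial (Fin n) k)) '' {i | i ∉ (f j).2}) := by
  intro j
  have h := hf.colon_eq_span_X hmon (j := j) (by simp)
  rwa [stanleyTailIdeal, List.setOf_mem_drop_ofFn, Set.image_image, List.getElem_ofFn] at h

/-- if `(x^{u_1},σ_1),…,(x^{u_m},σ_m)` is a Stanley filtration of `S/I`, then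
for every `j` the colon ideal `((I + ⟨x^{u_{j+1}},…,x^{u_m}⟩) : x^{u_j})` equals the prime
ideal `⟨x_i : i ∉ σ_j⟩` (0-based indexing: the pair at index `j` is divided out of the ideal
generated by `I` together with the monomials at indices `> j`).  In particular, taking `j`
to be the last index, `(I : x^{u_m}) = ⟨x_i : i ∉ σ_m⟩`. -/
theorem stanley_filtration_colon_prime {k : Type} [Field k] {n : ℕ}
    (I : Ideal (MvPolynomial (Fin n) k)) (hmon : IsMonomialIdeal I) (hproper : I ≠ ⊤)
    {m : ℕ} (f : Fin m → (Fin n →₀ ℕ) × Finset (Fin n))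
    (hf : IsStanleyFiltration I (List.ofFn f)) :
    ∀ j : Fin m,
      Submodule.colon
        (I ⊔ Ideal.span ((fun i : Fin m => monomial (f i).1 (1 : k)) '' {i | (j : ℕ) < (i : ℕ)}))
        (Ideal.span {monomial (f j).1 (1 : k)})
      = Ideal.span ((fun i => (X i : MvPolynomial (Fin n) k)) '' {i | i ∉ (f j).2}) :=
  stanley_filtration_colon_prime_general I hmon f hf
end

section
/- Let n = d + r and let 0 → ℤ^d → ℤ^n → ℤ^r → 0 be a short exact sequence of abelian groups, where the first map is given by the n×d integer matrix whose i-th row is b_i^T (b_1,…,b_n ∈ ℤ^d) and the second map is given by the r×n integer matrix A with columns a_1,…,a_n ∈ ℤ^r. If σ ⊆ {1,…,n} has |σ| = d and the d×d matrix with rows b_i for i ∈ σ has determinant ±1, then the r×r matrix with columns a_i for i ∉ σ has determinant ±1. -/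
/-- given a short exact sequence `0 → ℤ^d → ℤ^n → ℤ^r → 0` with `n = d + r`,
where the first map has matrix with rows `b_i` and the second has matrix with columns `a_i`,
if the `d×d` matrix with rows `b_i`, `i ∈ σ`, has determinant `±1` for a `d`-subset `σ`,
then the `r×r` matrix with columns `a_i`, `i ∉ σ`, has determinant `±1`. -/
theorem gale_dual_unimodular {d r n : ℕ} (hn : n = d + r)
    (b : Fin n → Fin d → ℤ) (a : Fin n → Fin r → ℤ)
    (hinj : Function.Injective fun (y : Fin d → ℤ) => fun i : Fin n => ∑ t, b i t * y t)
    (hsurj : Function.Surjective fun (z : Fin n → ℤ) => fun j : Fin r => ∑ i, a i j * z i)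
    (hexact : ∀ z : Fin n → ℤ,
      (∀ j : Fin r, ∑ i, a i j * z i = 0) ↔ ∃ y : Fin d → ℤ, ∀ i, ∑ t, b i t * y t = z i)
    (σ : Finset (Fin n)) (hcard : σ.card = d)
    (eb : Fin d ≃ {i : Fin n // i ∈ σ})
    (hb : (Matrix.of fun p q : Fin d => b (eb p) q).det = 1 ∨
          (Matrix.of fun p q : Fin d => b (eb p) q).det = -1)
    (ea : Fin r ≃ {i : Fin n // i ∉ σ}) :
    (Matrix.of fun p q : Fin r => a (ea q) p).det = 1 ∨
    (Matrix.of fun p q : Fin r => a (ea q) p).det = -1 := by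
  set Bσ : Matrix (Fin d) (Fin d) ℤ := Matrix.of fun p q : Fin d => b (eb p) q with hBσ
  set M : Matrix (Fin r) (Fin r) ℤ := Matrix.of fun p q : Fin r => a (ea q) p with hM
  have hBunit : IsUnit Bσ := by
    rw [Matrix.isUnit_iff_isUnit_det, Int.isUnit_iff]
    exact hb
  have hBsurj : Function.Surjective Bσ.mulVec :=
    Matrix.mulVec_surjective_iff_isUnit.mpr hBunit
  -- show M.mulVec is surjective
  have hMsurj : Function.Surjective M.mulVec := by
    intro w
    obtain ⟨z, hz⟩ := hsurj w
    -- find y with Bσ y = z restricted to σ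
    obtain ⟨y, hy⟩ := hBsurj (fun p => z (eb p))
    set z' : Fin n → ℤ := fun i => z i - ∑ t, b i t * y t with hz'
    have hBy : ∀ j : Fin r, ∑ i, a i j * (∑ t, b i t * y t) = 0 := by
      rw [hexact]
      exact ⟨y, fun i => rfl⟩
    have hz'σ : ∀ i ∈ σ, z' i = 0 := by
      intro i hi
      have := congrFun hy (eb.symm ⟨i, hi⟩)
      simp only [Matrix.mulVec, dotProduct, Equiv.apply_symm_apply] at this
      simp [hz', ← this, Matrix.mulVec, dotProduct, hBσ]
    refine ⟨fun q => z' (ea q), ?_⟩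
    funext j
    have hsum : ∑ i, a i j * z' i = w j := by
      simp only [hz', mul_sub, Finset.sum_sub_distrib]
      rw [show ∑ i, a i j * z i = w j from congrFun hz j, hBy j, sub_zero]
    have hsplit : ∑ i, a i j * z' i = ∑ i ∈ σ, a i j * z' i + ∑ i ∈ σᶜ, a i j * z' i :=
      (Finset.sum_add_sum_compl σ _).symm
    have h1 : ∑ i ∈ σ, a i j * z' i = 0 :=
      Finset.sum_eq_zero fun i hi => by rw [hz'σ i hi, mul_zero]
    have h2 : ∑ i ∈ σᶜ, a i j * z' i = ∑ q : Fin r, a (ea q) j * z' (ea q) := by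
      rw [Finset.sum_subtype σᶜ (fun x => Finset.mem_compl) (fun i => a i j * z' i)]
      exact (Equiv.sum_comp ea fun i : {i : Fin n // i ∉ σ} => a (i : Fin n) j * z' i).symm
    have : M.mulVec (fun q => z' (ea q)) j = ∑ q : Fin r, a (ea q) j * z' (ea q) := by
      simp [Matrix.mulVec, dotProduct, hM]
    rw [this, ← h2]
    have := hsplit
    rw [h1, zero_add] at this
    rw [← this, hsum]
  have hMunit : IsUnit M.det := by
    rw [← Matrix.isUnit_iff_isUnit_det]
    exact Matrix.mulVec_surjective_iff_isUnit.mp hMsurj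
  exact Int.isUnit_iff.mp hMunit
end

section
/- Let P ∈ ℚ[t_1,…,t_r] be a nonzero polynomial, let C ⊆ ℝ^r be a convex cone whose interior contains the first standard basis vector e_1, and let p ∈ ℝ^r. If P(t) ≥ 0 for every lattice point t ∈ ℤ^r with t ∈ p + C, then the coefficient of the leading monomial of P with respect to the graded lexicographic order with t_1 > t_2 > … > t_r is positive. -/
/-!
Substituting `t_i = n ^ w_i` turns `P` into a one-variable polynomial in `n` whose exponents are
the weights `⟨w, ν⟩` of the monomials `t ^ ν` of `P`. With `w_i = B ^ r + B ^ (r - i)` and `B`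
larger than every exponent occurring in `P`, the weight `⟨w, ν⟩ = |ν| B ^ r + (ν_1 … ν_r)_B`
orders the monomials of `P` exactly as the graded lexicographic order does, so the substituted
polynomial has the glex-leading coefficient of `P` as its leading coefficient. Since `w_1` is the
largest weight, `n ^ (-w_1) • (n ^ w - p) → e_1 ∈ interior C`, hence `n ^ w - p ∈ C` for large `n`.
There the substituted polynomial is nonnegative, so its leading coefficient is nonnegative.
-/

open MvPolynomial

/-- Graded lexicographic order on exponent vectors (with `t_1 > t_2 > … > t_r`, i.e.
smaller indices are more significant): first compare total degree, then lexicographically. -/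
def glexLt {r : ℕ} (a b : Fin r →₀ ℕ) : Prop :=
  (∑ i, a i) < (∑ i, b i) ∨ ((∑ i, a i) = (∑ i, b i) ∧ Finsupp.Lex (· < ·) (· < ·) a b)

open Filter Topology
open scoped MonomialOrder

theorem glexLt_iff_degLex_lt {r : ℕ} {a b : Fin r →₀ ℕ} :
    glexLt a b ↔ a ≺[MonomialOrder.degLex] b := by
  rw [MonomialOrder.degLex_lt_iff, Finsupp.DegLex.lt_iff]
  simp only [glexLt, ofDegLex_toDegLex, Finsupp.degree_eq_sum]
  rfl

theorem Nat.mul_add_lt_mul_add_of_lt {a b c x : ℕ} (y : ℕ) (hab : a < b) (hx : x < c) :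
    a * c + x < b * c + y := by
  nlinarith

section Digits

/-- The number with base-`B` digits `f 0, …, f (r - 1)`, the most significant digit first. -/
def digitValue (B : ℕ) {r : ℕ} (f : Fin r → ℕ) : ℕ := ∑ i, f i * B ^ (i.rev : ℕ)

theorem digitValue_succ (B : ℕ) {r : ℕ} (f : Fin (r + 1) → ℕ) :
    digitValue B f = f 0 * B ^ r + digitValue B (Fin.tail f) := by
  simp [digitValue, Fin.sum_univ_succ, Fin.tail]

variable {B r : ℕ}

theorem digitValue_lt_pow {f : Fin r → ℕ} (hf : ∀ i, f i < B) : digitValue B f < B ^ r := by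
  induction r with
  | zero => simp [digitValue]
  | succ r ih =>
    rw [digitValue_succ]
    exact (Nat.mul_add_lt_mul_add_of_lt 0 (hf 0) (ih fun i => hf i.succ)).trans_eq (by ring)

theorem digitValue_lt_digitValue {f g : Fin r → ℕ} (hf : ∀ i, f i < B)
    (h : toLex f < toLex g) : digitValue B f < digitValue B g := by
  induction r with
  | zero => obtain ⟨i, -⟩ := h; exact i.elim0
  | succ r ih =>
    obtain ⟨j, hpre, hj⟩ := h
    rw [digitValue_succ, digitValue_succ]
    cases j using Fin.cases with
    | zero => exact Nat.mul_add_lt_mul_add_of_lt _ hj (digitValue_lt_pow fun i => hf i.succ)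
    | succ k =>
      have h0 : f 0 = g 0 := hpre 0 (Fin.succ_pos k)
      rw [h0]
      exact Nat.add_lt_add_left (ih (fun i => hf i.succ)
        ⟨k, fun i hi => hpre i.succ (Fin.succ_lt_succ_iff.2 hi), hj⟩) _

end Digits

section GlexWeight

def glexWeight (r B : ℕ) (i : Fin r) : ℕ := B ^ r + B ^ (i.rev : ℕ)

variable {r B : ℕ}

theorem weight_glexWeight (ν : Fin r →₀ ℕ) :
    Finsupp.weight (glexWeight r B) ν = (∑ i, ν i) * B ^ r + digitValue B ν := by
  simp [Finsupp.weight_apply, Finsupp.sum_fintype, glexWeight, digitValue, mul_add,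
    Finset.sum_add_distrib, Finset.sum_mul]

theorem weight_glexWeight_lt_of_glexLt {ν μ : Fin r →₀ ℕ} (hν : ∀ i, ν i < B)
    (h : glexLt ν μ) :
    Finsupp.weight (glexWeight r B) ν < Finsupp.weight (glexWeight r B) μ := by
  rw [weight_glexWeight, weight_glexWeight]
  rcases h with hdeg | ⟨hdeg, hlex⟩
  · exact Nat.mul_add_lt_mul_add_of_lt _ hdeg (digitValue_lt_pow hν)
  · rw [hdeg]
    exact Nat.add_lt_add_left (digitValue_lt_digitValue hν (Finsupp.lex_def.1 hlex)) _

theorem glexWeight_lt_of_val_eq_zero (hB : 1 < B) {i₀ i : Fin r} (hi₀ : i₀.val = 0)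
    (hi : i ≠ i₀) : glexWeight r B i < glexWeight r B i₀ := by
  have hrev : (i.rev : ℕ) < i₀.rev := by
    have := Fin.val_ne_of_ne hi
    simp only [Fin.val_rev]
    omega
  exact Nat.add_lt_add_left (Nat.pow_lt_pow_right hB hrev) _

end GlexWeight

section KroneckerSubstitution

variable {σ R : Type*} [CommSemiring R] (w : σ → ℕ)

theorem eval_aeval_X_pow (P : MvPolynomial σ R) (x : R) :
    (aeval (fun i => Polynomial.X ^ w i) P).eval x = eval (fun i => x ^ w i) P := by
  induction P using MvPolynomial.induction_on <;> simp_all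

theorem aeval_X_pow_monomial (ν : σ →₀ ℕ) (c : R) :
    aeval (fun i => Polynomial.X ^ w i) (monomial ν c) =
      Polynomial.C c * Polynomial.X ^ Finsupp.weight w ν := by
  rw [aeval_monomial, Finsupp.weight_apply, Finsupp.sum, Finsupp.prod, Polynomial.algebraMap_eq]
  simp only [← pow_mul, Finset.prod_pow_eq_pow_sum, smul_eq_mul, mul_comm]

theorem leadingCoeff_aeval_X_pow {P : MvPolynomial σ R} {μ : σ →₀ ℕ} (hμ : μ ∈ P.support)
    (h : ∀ ν ∈ P.support, ν ≠ μ → Finsupp.weight w ν < Finsupp.weight w μ) :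
    (aeval (fun i => Polynomial.X ^ w i) P).leadingCoeff = P.coeff μ := by
  classical
  conv_lhs => rw [P.as_sum, ← Finset.sum_erase_add _ _ hμ]
  rw [map_add, map_sum, aeval_X_pow_monomial, Polynomial.leadingCoeff_add_of_degree_lt,
    Polynomial.leadingCoeff_C_mul_X_pow]
  rw [Polynomial.degree_C_mul_X_pow _ (mem_support_iff.1 hμ)]
  refine (Polynomial.degree_sum_le _ _).trans_lt
    ((Finset.sup_lt_iff (WithBot.bot_lt_coe _)).2 fun ν hν => ?_)
  rw [aeval_X_pow_monomial]
  exact (Polynomial.degree_C_mul_X_pow_le _ _).trans_lt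
    (WithBot.coe_lt_coe.2 (h ν (Finset.mem_of_mem_erase hν) (Finset.ne_of_mem_erase hν)))

end KroneckerSubstitution

theorem Polynomial.leadingCoeff_nonneg_of_eventually_nonneg {𝕜 : Type*} [NormedField 𝕜]
    [LinearOrder 𝕜] [IsStrictOrderedRing 𝕜] [Archimedean 𝕜] [OrderTopology 𝕜]
    {Q : Polynomial 𝕜} (h : ∀ᶠ n : ℕ in atTop, 0 ≤ Q.eval (n : 𝕜)) : 0 ≤ Q.leadingCoeff := by
  by_contra! hneg
  by_cases hdeg : 0 < Q.degree
  · obtain ⟨n, hn, hlt⟩ := (h.and ((Q.tendsto_atBot_of_leadingCoeff_nonpos hdeg hneg.le).comp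
      tendsto_natCast_atTop_atTop |>.eventually (eventually_lt_atBot 0))).exists
    exact (hn.trans_lt hlt).false
  · rw [Polynomial.eq_C_of_degree_le_zero (not_lt.1 hdeg)] at h hneg
    obtain ⟨n, hn⟩ := h.exists
    simp only [Polynomial.eval_C, Polynomial.leadingCoeff_C] at hn hneg
    exact (hn.trans_lt hneg).false

theorem eventually_mem_of_tendsto_inv_smul {α E : Type*} [AddCommGroup E] [Module ℝ E]
    [TopologicalSpace E] {C : Set E} (hC : ∀ x ∈ C, ∀ c : ℝ, 0 < c → c • x ∈ C) {x : E}
    (hx : x ∈ interior C) {l : Filter α} {a : α → ℝ} {f : α → E} (ha : ∀ᶠ n in l, 0 < a n)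
    (hf : Tendsto (fun n => (a n)⁻¹ • f n) l (𝓝 x)) : ∀ᶠ n in l, f n ∈ C := by
  filter_upwards [ha, hf (isOpen_interior.mem_nhds hx)] with n han hn
  simpa [smul_inv_smul₀ han.ne'] using hC _ (interior_subset hn) _ han

theorem tendsto_inv_pow_smul_pow_sub {ι : Type*} [DecidableEq ι] {w : ι → ℕ} {i₀ : ι}
    (hw : ∀ i ≠ i₀, w i < w i₀) (h₀ : 0 < w i₀) (p : ι → ℝ) :
    Tendsto (fun x : ℝ => (x ^ w i₀)⁻¹ • ((fun i => x ^ w i) - p)) atTop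
      (𝓝 (Pi.single i₀ 1)) := by
  refine tendsto_pi_nhds.2 fun i => ?_
  have hzpow : Tendsto (fun x : ℝ => x ^ ((w i : ℤ) - w i₀)) atTop
      (𝓝 ((Pi.single i₀ 1 : ι → ℝ) i)) := by
    by_cases hi : i = i₀
    · subst hi; simp
    · simpa [hi] using tendsto_zpow_atTop_zero (by have := hw i hi; omega)
  have hinv : Tendsto (fun x : ℝ => (x ^ w i₀)⁻¹) atTop (𝓝 0) :=
    (tendsto_pow_atTop h₀.ne').inv_tendsto_atTop
  have hlim := hzpow.sub (hinv.const_mul (p i))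
  rw [mul_zero, sub_zero] at hlim
  refine hlim.congr' ?_
  filter_upwards [eventually_gt_atTop 0] with x hx
  simp only [Pi.smul_apply, Pi.sub_apply, smul_eq_mul, zpow_sub₀ hx.ne', zpow_natCast]
  field_simp

theorem leading_coeff_pos_of_nonneg_on_cone_general {r : ℕ} (hr : 0 < r)
    (P : MvPolynomial (Fin r) ℚ) (hP : P ≠ 0)
    (C : Set (Fin r → ℝ))
    (hcone : ∀ x ∈ C, ∀ c : ℝ, 0 < c → c • x ∈ C)
    (he : (Pi.single (⟨0, hr⟩ : Fin r) (1 : ℝ)) ∈ interior C)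
    (p : Fin r → ℝ)
    (hpos : ∀ t : Fin r → ℤ, ((fun i => (t i : ℝ)) - p) ∈ C →
      0 ≤ MvPolynomial.eval (fun i => (t i : ℚ)) P) :
    ∃ μ ∈ P.support, (∀ ν ∈ P.support, ν ≠ μ → glexLt ν μ) ∧ 0 < P.coeff μ := by
  set μ := MonomialOrder.degLex.degree P
  have hμ : μ ∈ P.support := (MonomialOrder.degLex.degree_mem_support_iff P).2 hP
  have hmax : ∀ ν ∈ P.support, ν ≠ μ → glexLt ν μ := fun ν hν hne =>
    glexLt_iff_degLex_lt.2 ((MonomialOrder.degLex.le_degree hν).lt_of_ne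
      (MonomialOrder.degLex.toSyn.injective.ne hne))
  refine ⟨μ, hμ, hmax, ?_⟩
  set w := glexWeight r (P.totalDegree + 2)
  have hdigit : ∀ ν ∈ P.support, ∀ i, ν i < P.totalDegree + 2 := fun ν hν i => by
    have := (monomial_le_degreeOf i hν).trans (degreeOf_le_totalDegree P i)
    omega
  have hQ : (aeval (fun i => Polynomial.X ^ w i) P).leadingCoeff = P.coeff μ :=
    leadingCoeff_aeval_X_pow w hμ fun ν hν hne =>
      weight_glexWeight_lt_of_glexLt (hdigit ν hν) (hmax ν hν hne)
  have hw : ∀ i ≠ ⟨0, hr⟩, w i < w ⟨0, hr⟩ := fun i hi =>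
    glexWeight_lt_of_val_eq_zero (by omega) rfl hi
  have hw₀ : 0 < w ⟨0, hr⟩ := by simp only [w, glexWeight]; positivity
  have hC : ∀ᶠ n : ℕ in atTop, (fun i => (n : ℝ) ^ w i) - p ∈ C :=
    eventually_mem_of_tendsto_inv_smul hcone he
      ((eventually_gt_atTop 1).mono fun n hn => by positivity)
      ((tendsto_inv_pow_smul_pow_sub hw hw₀ p).comp tendsto_natCast_atTop_atTop)
  have hQ_nonneg :
      ∀ᶠ n : ℕ in atTop, 0 ≤ (aeval (fun i => Polynomial.X ^ w i) P).eval (n : ℚ) :=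
    hC.mono fun n hn => by
      simpa [eval_aeval_X_pow] using hpos (fun i => (n : ℤ) ^ w i) (by simpa using hn)
  exact (hQ ▸ Polynomial.leadingCoeff_nonneg_of_eventually_nonneg hQ_nonneg).lt_of_ne'
    (mem_support_iff.1 hμ)

/-- let `P ∈ ℚ[t_1,…,t_r]` be nonzero, `C ⊆ ℝ^r` a convex cone whose interior
contains `e_1`, and `p ∈ ℝ^r`.  If `P(t) ≥ 0` for every lattice point `t ∈ p + C`, then the
coefficient of the glex-leading monomial of `P` is positive. -/
theorem leading_coeff_pos_of_nonneg_on_cone {r : ℕ} (hr : 0 < r)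
    (P : MvPolynomial (Fin r) ℚ) (hP : P ≠ 0)
    (C : Set (Fin r → ℝ)) (hconv : Convex ℝ C)
    (hcone : ∀ x ∈ C, ∀ c : ℝ, 0 < c → c • x ∈ C)
    (he : (Pi.single (⟨0, hr⟩ : Fin r) (1 : ℝ)) ∈ interior C)
    (p : Fin r → ℝ)
    (hpos : ∀ t : Fin r → ℤ, ((fun i => (t i : ℝ)) - p) ∈ C →
      0 ≤ MvPolynomial.eval (fun i => (t i : ℚ)) P) :
    ∃ μ ∈ P.support, (∀ ν ∈ P.support, ν ≠ μ → glexLt ν μ) ∧ 0 < P.coeff μ :=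
  leading_coeff_pos_of_nonneg_on_cone_general hr P hP C hcone he p hpos
end

section
/- Let n ≥ 2, 1 ≤ ℓ ≤ n−1, set m = n − ℓ, and let b_1,…,b_ℓ be positive integers. Let I ⊆ S = k[x_1,…,x_n] be the monomial ideal generated by x_1,…,x_{m−1} together with the monomials g_j = (∏_{s=1}^{j−1} x_{m+s−1}^{b_s})·x_{m+j−1}^{b_j+1} for 1 ≤ j ≤ ℓ−1 and g_ℓ = ∏_{s=1}^{ℓ} x_{m+s−1}^{b_s}. Then the pairs ((∏_{s=1}^{j−1} x_{m+s−1}^{b_s})·x_{m+j−1}^{i}, {m+j, m+j+1, …, n}) for j = 1,…,ℓ and i = 0,…,b_j − 1, ordered lexicographically by (j, i), form a Stanley filtration of S/I. -/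
open MvPolynomial

open MvPolynomial

/-- The exponent vector (0-based) of the monomial
`(∏_{s=0}^{j-1} x_{(m-1)+s}^{b s}) · x_{(m-1)+j}^{i}`, which in the 1-based notation of the
paper is `(∏_{s=1}^{j} x_{m+s-1}^{b_s}) · x_{m+j}^{i}`. -/
noncomputable def lexExp (n m : ℕ) (b : ℕ → ℕ) (j i : ℕ) : Fin n →₀ ℕ :=
  Finsupp.equivFunOnFinite.symm (fun t : Fin n =>
    if (t : ℕ) + 1 < m then 0
    else if (t : ℕ) < m - 1 + j then b ((t : ℕ) - (m - 1))
    else if (t : ℕ) = m - 1 + j then i else 0)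

/-!
For an exponent vector `B` and a position `p`, consider the monomial ideal generated by the
`x^{B|<t} · x_t^{B t + 1}` for `t < p` together with `x^{B|<p} · x_p^{i₀}`, where
`x^{B|<t} = ∏_{s<t} x_s^{B s}`. A monomial `x^w` avoids it exactly when for some `t ≤ p` the
exponents `w` agree with `B` before `t` and `w t < B t` (`w t < i₀` if `t = p`); this `t` is unique,
and `(t, w t)` singles out the one Stanley space `(x^{B|<t} · x_t^{w t}, {s > t})` containing
`x^w`. Adding to the ideal the monomials of all pairs from the `r`-th one on (in lex order) yields
the ideal of the same kind that ends at the `r`-th pair, because that monomial divides all later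
ones; so every prefix is again a Stanley decomposition. The saturated lex ideal is the case
`B = (0,…,0,b_1,…,b_ℓ,…)` with `m - 1` leading zeros: its generators with `B t = 0` are the
variables `x_t`.
-/

section SortedList

variable {α β : Type*} [LinearOrder β] {f : α → β} {L : List α}

lemma List.Pairwise.mem_take_iff_lt_getElem (hL : L.Pairwise (fun a a' => f a < f a'))
    {r : ℕ} (hr : r < L.length) {a : α} : a ∈ L.take r ↔ a ∈ L ∧ f a < f L[r] := by
  have hsplit := (List.take_append_drop r L).symm
  rw [List.drop_eq_getElem_cons hr] at hsplit
  rw [hsplit, List.pairwise_append, List.pairwise_cons] at hL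
  obtain ⟨-, ⟨hhead, -⟩, hcross⟩ := hL
  refine ⟨fun ha => ⟨List.mem_of_mem_take ha, hcross a ha _ List.mem_cons_self⟩, ?_⟩
  rintro ⟨ha, hlt⟩
  rw [hsplit, List.mem_append, List.mem_cons] at ha
  rcases ha with ha | rfl | ha
  · exact ha
  · exact absurd hlt (lt_irrefl _)
  · exact absurd (hhead a ha) hlt.asymm

lemma List.Pairwise.mem_drop_iff_getElem_le (hL : L.Pairwise (fun a a' => f a < f a'))
    {r : ℕ} (hr : r < L.length) {a : α} : a ∈ L.drop r ↔ a ∈ L ∧ f L[r] ≤ f a := by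
  have hsplit := (List.take_append_drop r L).symm
  rw [List.drop_eq_getElem_cons hr] at hsplit
  rw [hsplit, List.pairwise_append, List.pairwise_cons] at hL
  obtain ⟨-, ⟨hhead, -⟩, hcross⟩ := hL
  rw [List.drop_eq_getElem_cons hr, List.mem_cons]
  constructor
  · rintro (rfl | ha)
    · exact ⟨List.getElem_mem hr, le_rfl⟩
    · exact ⟨List.mem_of_mem_drop ha, (hhead a ha).le⟩
  · rintro ⟨ha, hle⟩
    rw [hsplit, List.mem_append, List.mem_cons] at ha
    rcases ha with ha | ha | ha
    · exact absurd (hcross a ha _ List.mem_cons_self) hle.not_gt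
    · exact Or.inl ha
    · exact Or.inr ha

end SortedList

theorem exists_agree_lt_iff {ι : Type*} [LinearOrder ι] [WellFoundedLT ι] (B c : ι → ℕ)
    (p : ι) (i₀ : ℕ) :
    (∃ t ≤ p, (∀ s < t, c s = B s) ∧ c t < if t < p then B t else i₀) ↔
      ¬ ((∃ t < p, (∀ s < t, B s ≤ c s) ∧ B t < c t) ∨ ((∀ s < p, B s ≤ c s) ∧ i₀ ≤ c p)) := by
  constructor
  · rintro ⟨t, htp, hagree, hlt⟩ (⟨t', ht'p, hle, hgt⟩ | ⟨hle, hge⟩)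
    · rcases lt_trichotomy t' t with h | rfl | h
      · exact (hagree t' h).not_gt hgt
      · rw [if_pos ht'p] at hlt
        exact hlt.not_gt hgt
      · rw [if_pos (h.trans ht'p)] at hlt
        exact hlt.not_ge (hle t h)
    · rcases htp.lt_or_eq with h | rfl
      · rw [if_pos h] at hlt
        exact hlt.not_ge (hle t h)
      · rw [if_neg (lt_irrefl t)] at hlt
        exact hlt.not_ge hge
  · intro h
    push Not at h
    obtain ⟨hstep, hlast⟩ := h
    set S : Set ι := {t | t ≤ p ∧ c t < if t < p then B t else i₀}
    have hS : S.Nonempty := by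
      by_cases hall : ∀ s < p, B s ≤ c s
      · exact ⟨p, le_rfl, by rw [if_neg (lt_irrefl p)]; exact hlast hall⟩
      · push Not at hall
        obtain ⟨s, hsp, hs⟩ := hall
        exact ⟨s, hsp.le, by rwa [if_pos hsp]⟩
    obtain ⟨t, ⟨htp, hlt⟩, hmin⟩ := wellFounded_lt.has_min S hS
    have hbelow : ∀ s < t, B s ≤ c s := fun s hst =>
      not_lt.mp fun hs => hmin s ⟨(hst.trans_le htp).le, by rwa [if_pos (hst.trans_le htp)]⟩ hst
    exact ⟨t, htp, fun s hst => le_antisymm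
      (hstep s (hst.trans_le htp) fun s' hs't => hbelow s' (hs't.trans hst)) (hbelow s hst), hlt⟩

lemma monomial_mem_span_monomial_image_iff {σ R : Type*} [CommSemiring R] [Nontrivial R]
    {G : Set (σ →₀ ℕ)} {w : σ →₀ ℕ} :
    monomial w (1 : R) ∈ Ideal.span ((fun u => monomial u (1 : R)) '' G) ↔ ∃ u ∈ G, u ≤ w := by
  classical
  rw [mem_ideal_span_monomial_image, support_monomial, if_neg one_ne_zero]
  simp

lemma span_monomial_image_le_iff {σ R : Type*} [CommSemiring R] [Nontrivial R]
    {G G' : Set (σ →₀ ℕ)} :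
    Ideal.span ((fun u => monomial u (1 : R)) '' G) ≤
        Ideal.span ((fun u => monomial u (1 : R)) '' G') ↔ ∀ u ∈ G, ∃ u' ∈ G', u' ≤ u := by
  simp only [Ideal.span_le, Set.image_subset_iff]
  exact forall₂_congr fun _ _ => monomial_mem_span_monomial_image_iff

section LexSegment

variable {n : ℕ} (B : Fin n → ℕ)

noncomputable def lexMono (t : Fin n) (i : ℕ) : Fin n →₀ ℕ :=
  Finsupp.equivFunOnFinite.symm fun s => if s < t then B s else if s = t then i else 0

noncomputable def lexPair (a : Fin n × ℕ) : (Fin n →₀ ℕ) × Finset (Fin n) :=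
  (lexMono B a.1 a.2, Finset.Ioi a.1)

def lexSegmentGens (p : Fin n) (i₀ : ℕ) : Set (Fin n →₀ ℕ) :=
  (fun t => lexMono B t (B t + 1)) '' Set.Iio p ∪ {lexMono B p i₀}

variable {B}

lemma lexMono_apply (t s : Fin n) (i : ℕ) :
    lexMono B t i s = if s < t then B s else if s = t then i else 0 := rfl

lemma lexMono_le_iff {t : Fin n} {i : ℕ} {w : Fin n →₀ ℕ} :
    lexMono B t i ≤ w ↔ (∀ s < t, B s ≤ w s) ∧ i ≤ w t := by
  refine ⟨fun h => ⟨fun s hs => ?_, ?_⟩, fun ⟨hlt, heq⟩ s => ?_⟩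
  · simpa [lexMono_apply, hs] using h s
  · simpa [lexMono_apply] using h t
  · rcases lt_trichotomy s t with hs | rfl | hs
    · simpa [lexMono_apply, hs] using hlt s hs
    · simpa [lexMono_apply] using heq
    · simp [lexMono_apply, hs.not_gt, hs.ne']

lemma lexMono_le_lexMono {t t' : Fin n} {i i' : ℕ} (h : toLex (t, i) ≤ toLex (t', i'))
    (hi : i ≤ B t) : lexMono B t i ≤ lexMono B t' i' := by
  rw [Prod.Lex.toLex_le_toLex] at h
  refine lexMono_le_iff.mpr ⟨fun s hs => ?_, ?_⟩
  · rcases h with h | ⟨rfl, -⟩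
    · simp [lexMono_apply, hs.trans h]
    · simp [lexMono_apply, hs]
  · rcases h with h | ⟨rfl, h⟩
    · simpa [lexMono_apply, h] using hi
    · simpa [lexMono_apply] using h

lemma mem_stanleyPairSet_lexMono_iff {t : Fin n} {i : ℕ} {w : Fin n →₀ ℕ} :
    w ∈ stanleyPairSet (lexMono B t i) (Finset.Ioi t) ↔ (∀ s < t, w s = B s) ∧ w t = i := by
  constructor
  · rintro ⟨v, hv, rfl⟩
    have hv0 : ∀ s ≤ t, v s = 0 := fun s hs =>
      by_contra fun h => (Finset.mem_Ioi.mp (hv s h)).not_ge hs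
    exact ⟨fun s hs => by simp [lexMono_apply, hs, hv0 s hs.le],
      by simp [lexMono_apply, hv0 t le_rfl]⟩
  · rintro ⟨hlt, heq⟩
    have hle : lexMono B t i ≤ w := lexMono_le_iff.mpr ⟨fun s hs => (hlt s hs).ge, heq.ge⟩
    refine ⟨w - lexMono B t i, fun s hs => Finset.mem_Ioi.mpr (not_le.mp fun hst => hs ?_),
      (add_tsub_cancel_of_le hle).symm⟩
    rcases hst.lt_or_eq with hst | rfl
    · simp [lexMono_apply, hst, hlt s hst]
    · simp [lexMono_apply, heq]

lemma disjoint_stanleyPairSet_lexMono {t t' : Fin n} {i i' : ℕ} (h : t < t') (hi : i < B t) :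
    Disjoint (stanleyPairSet (lexMono B t i) (Finset.Ioi t))
      (stanleyPairSet (lexMono B t' i') (Finset.Ioi t')) := by
  refine Set.disjoint_left.mpr fun w hw hw' => ?_
  rw [mem_stanleyPairSet_lexMono_iff] at hw hw'
  exact hi.ne (hw.2.symm.trans (hw'.1 t h))

lemma exists_mem_lexSegmentGens_le_iff {p : Fin n} {i₀ : ℕ} {w : Fin n →₀ ℕ} :
    (∃ u ∈ lexSegmentGens B p i₀, u ≤ w) ↔
      (∃ t < p, (∀ s < t, B s ≤ w s) ∧ B t < w t) ∨ ((∀ s < p, B s ≤ w s) ∧ i₀ ≤ w p) := by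
  simp [lexSegmentGens, lexMono_le_iff, or_comm]

theorem isStanleyDecomp_lexSegment {k : Type} [Field k] {p : Fin n} {i₀ : ℕ} (hi₀ : i₀ ≤ B p)
    (𝔖 : Finset ((Fin n →₀ ℕ) × Finset (Fin n)))
    (h𝔖 : ∀ q, q ∈ 𝔖 ↔
      ∃ a : Fin n × ℕ, toLex a < toLex (p, i₀) ∧ a.2 < B a.1 ∧ q = lexPair B a) :
    IsStanleyDecomp (Ideal.span ((fun u => monomial u (1 : k)) '' lexSegmentGens B p i₀)) 𝔖 := by
  constructor
  · intro q hq q' hq' hne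
    obtain ⟨⟨t, i⟩, -, hi, rfl⟩ := (h𝔖 q).mp hq
    obtain ⟨⟨t', i'⟩, -, hi', rfl⟩ := (h𝔖 q').mp hq'
    rcases lt_trichotomy t t' with h | rfl | h
    · exact disjoint_stanleyPairSet_lexMono h hi
    · refine Set.disjoint_left.mpr fun w hw hw' => hne ?_
      have hii' : i = i' := (mem_stanleyPairSet_lexMono_iff.mp hw).2.symm.trans
        (mem_stanleyPairSet_lexMono_iff.mp hw').2
      rw [hii']
    · exact (disjoint_stanleyPairSet_lexMono h hi').symm
  · ext w
    simp only [Set.mem_iUnion, Set.mem_ofPred_eq, Finset.mem_coe, exists_prop,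
      monomial_mem_span_monomial_image_iff, exists_mem_lexSegmentGens_le_iff,
      ← exists_agree_lt_iff]
    constructor
    · rintro ⟨q, hq, hw⟩
      obtain ⟨⟨t, i⟩, hlex, hi, rfl⟩ := (h𝔖 q).mp hq
      obtain ⟨hagree, hwt⟩ := mem_stanleyPairSet_lexMono_iff.mp hw
      dsimp only at hagree hwt hi
      subst hwt
      rw [Prod.Lex.toLex_lt_toLex] at hlex
      rcases hlex with h | ⟨rfl, h⟩
      · exact ⟨t, h.le, hagree, by rwa [if_pos h]⟩
      · exact ⟨t, le_rfl, hagree, by rwa [if_neg (lt_irrefl t)]⟩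
    · rintro ⟨t, htp, hagree, hlt⟩
      have hindex : toLex (t, w t) < toLex (p, i₀) ∧ w t < B t := by
        rcases htp.lt_or_eq with h | rfl
        · rw [if_pos h] at hlt
          exact ⟨Prod.Lex.toLex_lt_toLex.mpr (Or.inl h), hlt⟩
        · rw [if_neg (lt_irrefl t)] at hlt
          exact ⟨Prod.Lex.toLex_lt_toLex.mpr (Or.inr ⟨rfl, hlt⟩), hlt.trans_le hi₀⟩
      exact ⟨lexPair B (t, w t), (h𝔖 _).mpr ⟨(t, w t), hindex.1, hindex.2, rfl⟩,
        mem_stanleyPairSet_lexMono_iff.mpr ⟨hagree, rfl⟩⟩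

lemma span_lexSegmentGens_sup_eq {R : Type*} [CommSemiring R] [Nontrivial R] {p p₀ : Fin n}
    {i₀ : ℕ} (hp : p₀ ≤ p) (hi₀ : i₀ < B p₀) {T : Set (Fin n →₀ ℕ)} (hT : lexMono B p₀ i₀ ∈ T)
    (hT' : ∀ u ∈ T, lexMono B p₀ i₀ ≤ u) :
    Ideal.span ((fun u => monomial u (1 : R)) '' lexSegmentGens B p (B p)) ⊔
        Ideal.span ((fun u => monomial u (1 : R)) '' T) =
      Ideal.span ((fun u => monomial u (1 : R)) '' lexSegmentGens B p₀ i₀) := by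
  rw [← Ideal.span_union, ← Set.image_union]
  refine le_antisymm (span_monomial_image_le_iff.mpr ?_) (span_monomial_image_le_iff.mpr ?_)
  · have hlast : ∀ {t i}, toLex (p₀, i₀) ≤ toLex (t, i) →
        ∃ u ∈ lexSegmentGens B p₀ i₀, u ≤ lexMono B t i :=
      fun h => ⟨_, Or.inr rfl, lexMono_le_lexMono h hi₀.le⟩
    rintro u ((⟨t, -, rfl⟩ | rfl) | hu)
    · by_cases ht : t < p₀
      · exact ⟨_, Or.inl ⟨t, ht, rfl⟩, le_rfl⟩
      · refine hlast (Prod.Lex.toLex_le_toLex.mpr ?_)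
        rcases (not_lt.mp ht).lt_or_eq with ht | rfl
        · exact Or.inl ht
        · exact Or.inr ⟨rfl, by omega⟩
    · refine hlast (Prod.Lex.toLex_le_toLex.mpr ?_)
      rcases hp.lt_or_eq with hp | rfl
      · exact Or.inl hp
      · exact Or.inr ⟨rfl, hi₀.le⟩
    · exact ⟨_, Or.inr rfl, hT' u hu⟩
  · rintro u (⟨t, ht, rfl⟩ | rfl)
    · exact ⟨_, Or.inl (Or.inl ⟨t, lt_of_lt_of_le ht hp, rfl⟩), le_rfl⟩
    · exact ⟨_, Or.inr hT, le_rfl⟩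

theorem isStanleyFiltration_lexSegment {k : Type} [Field k] {p : Fin n} (L : List (Fin n × ℕ))
    (hL : L.Pairwise fun a a' => toLex a < toLex a')
    (hmem : ∀ a, a ∈ L ↔ a.1 ≤ p ∧ a.2 < B a.1) :
    IsStanleyFiltration (Ideal.span ((fun u => monomial u (1 : k)) '' lexSegmentGens B p (B p)))
      (L.map (lexPair B)) := by
  have hfull : IsStanleyDecomp
      (Ideal.span ((fun u => monomial u (1 : k)) '' lexSegmentGens B p (B p)))
      (L.map (lexPair B)).toFinset := by
    refine isStanleyDecomp_lexSegment le_rfl _ fun q => ?_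
    simp only [List.mem_toFinset, List.mem_map, hmem]
    refine ⟨fun ⟨a, ⟨hap, hab⟩, hq⟩ => ⟨a, ?_, hab, hq.symm⟩, fun ⟨a, hlt, hab, hq⟩ =>
      ⟨a, ⟨Prod.Lex.monotone_fst _ _ hlt.le, hab⟩, hq.symm⟩⟩
    rcases hap.lt_or_eq with hap | rfl
    · exact Prod.Lex.toLex_lt_toLex.mpr (Or.inl hap)
    · exact Prod.Lex.toLex_lt_toLex.mpr (Or.inr ⟨rfl, hab⟩)
  refine ⟨hfull, fun r _ hr => ?_⟩
  rcases hr.lt_or_eq with hr | rfl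
  · rw [List.length_map] at hr
    obtain ⟨ha₀p, ha₀⟩ := (hmem L[r]).mp (List.getElem_mem hr)
    have hdrop : (fun q : (Fin n →₀ ℕ) × Finset (Fin n) => monomial q.1 (1 : k)) ''
          {q | q ∈ (L.map (lexPair B)).drop r} =
        (fun u => monomial u (1 : k)) '' ((fun a => lexMono B a.1 a.2) '' {a | a ∈ L.drop r}) := by
      rw [Set.image_image]
      ext
      simp [← List.map_drop, lexPair]
    rw [hdrop, span_lexSegmentGens_sup_eq (T := (fun a => lexMono B a.1 a.2) '' {a | a ∈ L.drop r})
      ha₀p ha₀ ⟨L[r], (hL.mem_drop_iff_getElem_le hr).mpr ⟨List.getElem_mem hr, le_rfl⟩, rfl⟩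
      fun u ⟨a, ha, hu⟩ => hu ▸ lexMono_le_lexMono ((hL.mem_drop_iff_getElem_le hr).mp ha).2 ha₀.le]
    refine isStanleyDecomp_lexSegment ha₀.le _ fun q => ?_
    simp only [← List.map_take, List.mem_toFinset, List.mem_map, hL.mem_take_iff_lt_getElem hr,
      hmem]
    exact ⟨fun ⟨a, ⟨⟨_, hab⟩, hlt⟩, hq⟩ => ⟨a, hlt, hab, hq.symm⟩, fun ⟨a, hlt, hab, hq⟩ =>
      ⟨a, ⟨⟨(Prod.Lex.monotone_fst _ _ hlt.le).trans ha₀p, hab⟩, hlt⟩, hq.symm⟩⟩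
  · rw [List.take_length, List.drop_length]
    simpa using hfull

end LexSegment

section SaturatedLex

variable {n m ℓ : ℕ} {b : ℕ → ℕ}

def paddedExponents (n m : ℕ) (b : ℕ → ℕ) (t : Fin n) : ℕ :=
  if (t : ℕ) + 1 < m then 0 else b (t - (m - 1))

lemma paddedExponents_of_val_eq {t : Fin n} {j : ℕ} (ht : (t : ℕ) = m - 1 + j) :
    paddedExponents n m b t = b j := by
  rw [paddedExponents, if_neg (by omega)]
  congr 1
  omega

lemma lexExp_eq_lexMono {t : Fin n} {j : ℕ} (ht : (t : ℕ) = m - 1 + j) (i : ℕ) :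
    lexExp n m b j i = lexMono (paddedExponents n m b) t i := by
  ext s
  simp only [lexExp, Finsupp.equivFunOnFinite_symm_apply_apply, lexMono_apply, paddedExponents,
    Fin.lt_def, Fin.ext_iff]
  split_ifs <;> omega

lemma lexMono_paddedExponents_of_lt {t : Fin n} (ht : (t : ℕ) + 1 < m) :
    lexMono (paddedExponents n m b) t (paddedExponents n m b t + 1) = Finsupp.single t 1 := by
  ext s
  simp only [lexMono_apply, Finsupp.single_apply, paddedExponents, Fin.lt_def, Fin.ext_iff]
  split_ifs <;> omega

def lexIndexList (n m ℓ : ℕ) [NeZero n] (b : ℕ → ℕ) : List (Fin n × ℕ) :=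
  (List.range ℓ).flatMap fun j => (List.range (b j)).map fun i => (Fin.ofNat n (m - 1 + j), i)

variable [NeZero n]

lemma val_ofNat_of_lt {j : ℕ} (hmn : m + ℓ = n) (hj : j < ℓ) :
    (Fin.ofNat n (m - 1 + j) : ℕ) = m - 1 + j := by
  rw [Fin.val_ofNat, Nat.mod_eq_of_lt (by omega)]

lemma pairwise_lexIndexList (hmn : m + ℓ = n) :
    (lexIndexList n m ℓ b).Pairwise fun a a' => toLex a < toLex a' := by
  rw [lexIndexList, List.pairwise_flatMap]
  refine ⟨fun j _ => List.pairwise_map.mpr (List.pairwise_lt_range.imp ?_), ?_⟩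
  · exact fun h => Prod.Lex.toLex_lt_toLex.mpr (Or.inr ⟨rfl, h⟩)
  refine List.pairwise_lt_range.imp_of_mem fun hj hj' hjj' => ?_
  rw [List.mem_range] at hj hj'
  simp only [List.mem_map, List.mem_range]
  rintro _ ⟨i, -, rfl⟩ _ ⟨i', -, rfl⟩
  refine Prod.Lex.toLex_lt_toLex.mpr (Or.inl (Fin.lt_def.mpr ?_))
  rw [val_ofNat_of_lt hmn hj, val_ofNat_of_lt hmn hj']
  omega

lemma mem_lexIndexList_iff (hℓ : 1 ≤ ℓ) (hmn : m + ℓ = n) {a : Fin n × ℕ} :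
    a ∈ lexIndexList n m ℓ b ↔
      a.1 ≤ Fin.ofNat n (m - 1 + (ℓ - 1)) ∧ a.2 < paddedExponents n m b a.1 := by
  simp only [lexIndexList, List.mem_flatMap, List.mem_map, List.mem_range]
  rw [Fin.le_def, val_ofNat_of_lt hmn (by omega : ℓ - 1 < ℓ)]
  constructor
  · rintro ⟨j, hj, i, hi, rfl⟩
    rw [val_ofNat_of_lt hmn hj, paddedExponents_of_val_eq (val_ofNat_of_lt hmn hj)]
    exact ⟨by omega, hi⟩
  · obtain ⟨t, i⟩ := a
    rintro ⟨htp, hi⟩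
    dsimp only at htp hi
    have ht : ¬ (t : ℕ) + 1 < m := fun ht => by simp [paddedExponents, ht] at hi
    have hj : (t : ℕ) - (m - 1) < ℓ := by omega
    have hval : (t : ℕ) = m - 1 + ((t : ℕ) - (m - 1)) := by omega
    refine ⟨_, hj, i, ?_, Prod.ext (Fin.ext ?_) rfl⟩
    · rwa [← paddedExponents_of_val_eq (b := b) hval]
    · rw [val_ofNat_of_lt hmn hj, ← hval]

lemma map_lexPair_lexIndexList (hm : 1 ≤ m) (hmn : m + ℓ = n) :
    (lexIndexList n m ℓ b).map (lexPair (paddedExponents n m b)) =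
      (List.range ℓ).flatMap fun j => (List.range (b j)).map fun i =>
        (lexExp n m b j i, Finset.univ.filter fun t : Fin n => m + j ≤ (t : ℕ)) := by
  rw [lexIndexList, List.map_flatMap]
  refine List.flatMap_congr fun j hj => ?_
  have hval := val_ofNat_of_lt hmn (List.mem_range.mp hj)
  rw [List.map_map]
  refine List.map_congr_left fun i _ => ?_
  rw [Function.comp_apply, lexPair, lexExp_eq_lexMono hval]
  congr 1
  ext t
  simp only [Finset.mem_Ioi, Finset.mem_filter, Finset.mem_univ, true_and, Fin.lt_def, hval]
  omega

lemma saturatedLex_gens_eq (R : Type*) [CommSemiring R] (hℓ : 1 ≤ ℓ) (hmn : m + ℓ = n) :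
    {f | ∃ t : Fin n, (t : ℕ) + 1 < m ∧ f = X t} ∪
        {f | ∃ j : ℕ, j + 1 < ℓ ∧ f = monomial (lexExp n m b j (b j + 1)) (1 : R)} ∪
        {monomial (lexExp n m b (ℓ - 1) (b (ℓ - 1))) (1 : R)} =
      (fun u => monomial u (1 : R)) '' lexSegmentGens (paddedExponents n m b)
        (Fin.ofNat n (m - 1 + (ℓ - 1)))
        (paddedExponents n m b (Fin.ofNat n (m - 1 + (ℓ - 1)))) := by
  have hp := val_ofNat_of_lt hmn (by omega : ℓ - 1 < ℓ)
  rw [lexSegmentGens, Set.image_union, Set.image_singleton, Set.image_image,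
    lexExp_eq_lexMono hp, paddedExponents_of_val_eq hp]
  congr 1
  ext f
  simp only [Set.mem_union, Set.mem_ofPred_eq, Set.mem_image, Set.mem_Iio, Fin.lt_def, hp]
  constructor
  · rintro (⟨t, ht, rfl⟩ | ⟨j, hj, rfl⟩)
    · exact ⟨t, by omega, by rw [lexMono_paddedExponents_of_lt ht]; rfl⟩
    · have hval := val_ofNat_of_lt hmn (by omega : j < ℓ)
      exact ⟨Fin.ofNat n (m - 1 + j), by omega,
        by rw [lexExp_eq_lexMono hval, paddedExponents_of_val_eq hval]⟩
  · rintro ⟨t, ht, rfl⟩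
    by_cases htm : (t : ℕ) + 1 < m
    · exact Or.inl ⟨t, htm, by rw [lexMono_paddedExponents_of_lt htm]; rfl⟩
    · have hval : (t : ℕ) = m - 1 + (t - (m - 1)) := by omega
      exact Or.inr ⟨t - (m - 1), by omega,
        by rw [lexExp_eq_lexMono hval, paddedExponents_of_val_eq hval]⟩

end SaturatedLex

theorem reeves_stillman_stanley_filtration_general {k : Type} [Field k] {n ℓ m : ℕ}
    (hℓ1 : 1 ≤ ℓ) (hℓ2 : ℓ ≤ n - 1) (hm : m = n - ℓ)
    (b : ℕ → ℕ)
    (I : Ideal (MvPolynomial (Fin n) k))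
    (hI : I = Ideal.span
      ({f | ∃ t : Fin n, (t : ℕ) + 1 < m ∧ f = X t} ∪
       {f | ∃ j : ℕ, j + 1 < ℓ ∧ f = monomial (lexExp n m b j (b j + 1)) (1 : k)} ∪
       {monomial (lexExp n m b (ℓ - 1) (b (ℓ - 1))) (1 : k)})) :
    IsStanleyFiltration I
      ((List.range ℓ).flatMap fun j => (List.range (b j)).map fun i =>
        (lexExp n m b j i, Finset.univ.filter fun t : Fin n => m + j ≤ (t : ℕ))) := by
  have hm1 : 1 ≤ m := by omega
  have hmn : m + ℓ = n := by omega
  have : NeZero n := ⟨by omega⟩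
  rw [hI, saturatedLex_gens_eq k hℓ1 hmn, ← map_lexPair_lexIndexList hm1 hmn]
  exact isStanleyFiltration_lexSegment _ (pairwise_lexIndexList hmn)
    fun a => mem_lexIndexList_iff hℓ1 hmn

/-- for the saturated lexicographic ideal
`I = ⟨x_1,…,x_{m−1}, g_1,…,g_ℓ⟩` of Reeves–Stillman (with `m = n − ℓ`,
`g_j = (∏_{s=1}^{j−1} x_{m+s−1}^{b_s})·x_{m+j−1}^{b_j+1}` for `j < ℓ` and
`g_ℓ = ∏_{s=1}^{ℓ} x_{m+s−1}^{b_s}`), the pairs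
`((∏_{s=1}^{j−1} x_{m+s−1}^{b_s})·x_{m+j−1}^{i}, {m+j,…,n})`, for `j = 1,…,ℓ` and
`i = 0,…,b_j−1`, ordered lexicographically by `(j,i)`, form a Stanley filtration of `S/I`.
Everything is stated with 0-based indices: variables are `x_0,…,x_{n−1}` and `b`, `j` are
0-based, so e.g. the 1-based variable `x_{m+s−1}` is the 0-based variable `x_{(m−1)+s}`. -/
theorem reeves_stillman_stanley_filtration {k : Type} [Field k] {n ℓ m : ℕ}
    (hn : 2 ≤ n) (hℓ1 : 1 ≤ ℓ) (hℓ2 : ℓ ≤ n - 1) (hm : m = n - ℓ)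
    (b : ℕ → ℕ) (hb : ∀ s < ℓ, 1 ≤ b s)
    (I : Ideal (MvPolynomial (Fin n) k))
    (hI : I = Ideal.span
      ({f | ∃ t : Fin n, (t : ℕ) + 1 < m ∧ f = X t} ∪
       {f | ∃ j : ℕ, j + 1 < ℓ ∧ f = monomial (lexExp n m b j (b j + 1)) (1 : k)} ∪
       {monomial (lexExp n m b (ℓ - 1) (b (ℓ - 1))) (1 : k)})) :
    IsStanleyFiltration I
      ((List.range ℓ).flatMap fun j => (List.range (b j)).map fun i =>
        (lexExp n m b j i, Finset.univ.filter fun t : Fin n => m + j ≤ (t : ℕ))) :=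
  reeves_stillman_stanley_filtration_general hℓ1 hℓ2 hm b I hI
end
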